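/- arXiv:2505.09621 — 3 statements merged into one kernel-verified Lean document; each statement's English description precedes it below -/
import Mathlib

section
/- Let N ≥ 1 and let F ∈ Faisc^N(ℝ²) be an N-beam. Then for every t ∈ [0,1], the t-polygonal chain P_t of F belongs to LO^N(ℝ²), i.e., P_t is neither obscured nor grazing. -/
open Real Set
open scoped Classical

noncomputable section

abbrev Pt : Type := EuclideanSpace ℝ (Fin 2)

noncomputable def pt (x y : ℝ) : Pt := (WithLp.equiv 2 (Fin 2 → ℝ)).symm ![x, y]

def dot (u v : Pt) : ℝ := u 0 * v 0 + u 1 * v 1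

noncomputable def nvec (θ : Real.Angle) : Pt := pt (-θ.sin) θ.cos

noncomputable def dirvec (θ : Real.Angle) : Pt := pt θ.cos θ.sin

noncomputable def angleOf (v : Pt) : Real.Angle := ((Complex.arg ⟨v 0, v 1⟩ : ℝ) : Real.Angle)

/-- The space of `N`-polygonal chains `(ℝ²)^{N+2}`. -/
abbrev Chain (N : ℕ) := Fin (N + 2) → Pt

/-- Access the `i`-th point of a chain (junk value `0` out of range). -/
def cg {N : ℕ} (c : Chain N) (i : ℕ) : Pt := if h : i < N + 2 then c ⟨i, h⟩ else 0

/-- The `j`-th ray of a chain: `R_0 = (c_0,c_1]`, `R_j = [c_j, c_{j+1}]`. -/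
def ray {N : ℕ} (c : Chain N) (j : ℕ) : Set Pt :=
  if j = 0 then segment ℝ (cg c 0) (cg c 1) \ {cg c 0}
  else segment ℝ (cg c j) (cg c (j + 1))

def Obscured {N : ℕ} (c : Chain N) : Prop :=
  cg c 0 = cg c 1 ∨
    ∃ j k : ℕ, j ≤ N ∧ 1 ≤ k ∧ k ≤ N + 1 ∧ k ≠ j ∧ k ≠ j + 1 ∧ cg c k ∈ ray c j

def Grazing {N : ℕ} (c : Chain N) : Prop :=
  ∃ i : ℕ, 1 ≤ i ∧ i ≤ N ∧ cg c i ∈ openSegment ℝ (cg c (i - 1)) (cg c (i + 1))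

/-- Obscuration-free, non-grazing chains. -/
def LO (N : ℕ) : Set (Chain N) := {c | ¬Obscured c ∧ ¬Grazing c}

/-- Access the angle of the `j`-th mirror, `1 ≤ j ≤ N` (junk out of range). -/
def θg {N : ℕ} (θ : Fin N → Real.Angle) (j : ℕ) : Real.Angle :=
  if h : j - 1 < N then θ ⟨j - 1, h⟩ else 0

/-- Reflexion condition: at each mirror both adjacent dot products with `n(θ_j)`
are nonzero and of the same sign. -/
def IsReflexive {N : ℕ} (c : Chain N) (θ : Fin N → Real.Angle) : Prop :=
  ∀ j : ℕ, 1 ≤ j → j ≤ N →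
    0 < dot (cg c (j + 1) - cg c j) (nvec (θg θ j)) *
        dot (cg c (j - 1) - cg c j) (nvec (θg θ j))

abbrev RChain (N : ℕ) := Chain N × (Fin N → Real.Angle)

/-- The space of reflexive polygonal chains. -/
def LR (N : ℕ) : Set (RChain N) := {L | L.1 ∈ LO N ∧ IsReflexive L.1 L.2}

/-- The open arc `α + ε·(0,π)` in `ℝ/2πℤ`. -/
def arc (α : Real.Angle) (ε : ℤ) : Set Real.Angle :=
  {β | ∃ s : ℝ, 0 < s ∧ s < π ∧ β = α + (((ε : ℝ) * s : ℝ) : Real.Angle)}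

/-- Positive orientation set of the `j`-th mirror. -/
def APlus {N : ℕ} (c : Chain N) (j : ℕ) : Set Real.Angle :=
  arc (angleOf (cg c j - cg c (j - 1))) ((-1) ^ j) ∩
    arc (angleOf (cg c j - cg c (j + 1))) ((-1) ^ j)

/-- Negative orientation set of the `j`-th mirror. -/
def AMinus {N : ℕ} (c : Chain N) (j : ℕ) : Set Real.Angle :=
  arc (angleOf (cg c j - cg c (j - 1))) ((-1) ^ (j + 1)) ∩
    arc (angleOf (cg c j - cg c (j + 1))) ((-1) ^ (j + 1))

/-- The characteristic: index `j : Fin N` corresponds to the `(j+1)`-st mirror. -/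
noncomputable def Car {N : ℕ} (L : RChain N) : Fin N → ℤ :=
  fun j => if θg L.2 (j.1 + 1) ∈ APlus L.1 (j.1 + 1) then 1 else -1

abbrev Beam (N : ℕ) := Chain N × Chain N

def IsPrimaryBeam {N : ℕ} (F : Beam N) : Prop :=
  (∀ k : ℕ, 1 ≤ k → k ≤ N → cg F.1 k ≠ cg F.2 k) ∧
  cg F.1 0 = pt (-1) 0 ∧ cg F.2 0 = pt (-1) 0 ∧
  cg F.1 (N + 1) = cg F.2 (N + 1) ∧
  midpoint ℝ (cg F.1 1) (cg F.2 1) = pt 0 0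

def lineThrough (p q : Pt) : Set Pt := {x | ∃ u : ℝ, x = p + u • (q - p)}

noncomputable def pickPt (S : Set Pt) : Pt := if h : S.Nonempty then h.choose else 0

noncomputable def pickR (S : Set ℝ) : ℝ := if h : S.Nonempty then h.choose else 0

/-- `impact F t k` is the `(k+1)`-st impact point `P_{k+1}^t` of the `t`-polygonal chain. -/
noncomputable def impact {N : ℕ} (F : Beam N) (t : ℝ) : ℕ → Pt
  | 0 => (1 - t) • cg F.1 1 + t • cg F.2 1
  | k + 1 =>
    let i := k + 2
    let prev := impact F t k
    if (lineThrough (cg F.1 (i - 1)) (cg F.1 i) ∩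
        lineThrough (cg F.2 (i - 1)) (cg F.2 i)).Nonempty then
      pickPt (lineThrough prev
          (pickPt (lineThrough (cg F.1 (i - 1)) (cg F.1 i) ∩
            lineThrough (cg F.2 (i - 1)) (cg F.2 i))) ∩
        segment ℝ (cg F.1 i) (cg F.2 i))
    else
      (1 - pickR {l : ℝ | prev = (1 - l) • cg F.1 (i - 1) + l • cg F.2 (i - 1)}) • cg F.1 i +
        pickR {l : ℝ | prev = (1 - l) • cg F.1 (i - 1) + l • cg F.2 (i - 1)} • cg F.2 i

/-- The `t`-polygonal chain `P_t` of a (primary) beam. -/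
noncomputable def tChain {N : ℕ} (F : Beam N) (t : ℝ) : Chain N :=
  fun i => if (i : ℕ) = 0 then impact F t 0 + pt (-1) 0 else impact F t ((i : ℕ) - 1)

/-- The `k`-th mirror `S_k = [a_k, b_k]` of a beam. -/
def mirror {N : ℕ} (F : Beam N) (k : ℕ) : Set Pt := segment ℝ (cg F.1 k) (cg F.2 k)

def NonObscuration {N : ℕ} (F : Beam N) : Prop :=
  ∀ j : ℕ, j ≤ N → ∀ t ∈ Icc (0 : ℝ) 1, ∀ k : ℕ,
    1 ≤ k → k ≤ N + 1 → k ≠ j → k ≠ j + 1 → ray (tChain F t) j ∩ mirror F k = ∅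

/-- Four reals are nonzero and of the same sign. -/
def SameSign₄ (x y z w : ℝ) : Prop := 0 < x * y ∧ 0 < x * z ∧ 0 < x * w

/-- A unit normal vector to the direction `u`. -/
noncomputable def normalOf (u : Pt) : Pt := ‖u‖⁻¹ • pt (-u 1) (u 0)

def ReflexionCond {N : ℕ} (F : Beam N) : Prop :=
  ∀ i : ℕ, 1 ≤ i → i ≤ N →
    SameSign₄
      (dot (cg F.1 (i - 1) - cg F.1 i) (normalOf (cg F.2 i - cg F.1 i)))
      (dot (cg F.2 (i - 1) - cg F.2 i) (normalOf (cg F.2 i - cg F.1 i)))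
      (dot (cg F.1 (i + 1) - cg F.1 i) (normalOf (cg F.2 i - cg F.1 i)))
      (dot (cg F.2 (i + 1) - cg F.2 i) (normalOf (cg F.2 i - cg F.1 i)))

/-- The space of `N`-beams. -/
def Faisc (N : ℕ) : Set (Beam N) :=
  {F | IsPrimaryBeam F ∧ NonObscuration F ∧ ReflexionCond F}

/-- The centered polygonal chain `M(F) = P_{1/2}`. -/
noncomputable def MF {N : ℕ} (F : Beam N) : Chain N := tChain F (1 / 2)

/-- The reflexive polygonal chain induced by a beam. -/
noncomputable def MR {N : ℕ} (F : Beam N) : RChain N :=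
  (MF F, fun j => angleOf (cg F.1 (j.1 + 1) - cg F.2 (j.1 + 1)))

/-- The characteristic of a beam. -/
noncomputable def CarF {N : ℕ} (F : Beam N) : Fin N → ℤ := Car (MR F)

/-- The pair of polygonal chains `P_l(L)` built from a reflexive chain and mirror
half-lengths `la, lb` (indexed by `1 ≤ j ≤ N`). -/
noncomputable def Pl {N : ℕ} (L : RChain N) (la lb : ℕ → ℝ) : Beam N :=
  (fun i => if 1 ≤ (i : ℕ) ∧ (i : ℕ) ≤ N
      then L.1 i + la (i : ℕ) • dirvec (θg L.2 (i : ℕ)) else L.1 i,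
   fun i => if 1 ≤ (i : ℕ) ∧ (i : ℕ) ≤ N
      then L.1 i - lb (i : ℕ) • dirvec (θg L.2 (i : ℕ)) else L.1 i)

/-- Minimal mirror-to-mirror distance of a reflexive chain. -/
noncomputable def dR {N : ℕ} (L : RChain N) : ℝ :=
  sInf {r | ∃ i : ℕ, 1 ≤ i ∧ i ≤ N ∧
    r = min |dot (cg L.1 (i - 1) - cg L.1 i) (nvec (θg L.2 i))|
          |dot (cg L.1 (i + 1) - cg L.1 i) (nvec (θg L.2 i))|}

/-- Minimal distance from the non-adjacent mirrors to the rays. -/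
noncomputable def dO {N : ℕ} (L : RChain N) : ℝ :=
  sInf {r | ∃ j k : ℕ, j ≤ N ∧ 1 ≤ k ∧ k ≤ N + 1 ∧ k ≠ j ∧ k ≠ j + 1 ∧
    r = Metric.infDist (cg L.1 k) (ray L.1 j)}

/-- `K = max_{1 ≤ j ≤ N} max (la j) (lb j)`. -/
noncomputable def Kmax (N : ℕ) (la lb : ℕ → ℝ) : ℝ :=
  sSup {r | ∃ j : ℕ, 1 ≤ j ∧ j ≤ N ∧ r = max (la j) (lb j)}

/-- The subbeam `F_μ` of a beam. -/
noncomputable def subBeam {N : ℕ} (F : Beam N) (μ : ℝ) : Beam N :=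
  (fun i => if (i : ℕ) = 0 then pt (-1) 0 else tChain F ((1 - μ) / 2) i,
   fun i => if (i : ℕ) = 0 then pt (-1) 0 else tChain F ((1 + μ) / 2) i)
lemma pt_zero : pt 0 0 = (0 : Pt) := by
  ext i; fin_cases i <;> simp [pt]

lemma pt_ne : pt (-1) 0 ≠ (0 : Pt) := by
  intro h
  have := congrArg (fun v : Pt => v 0) h
  simp [pt] at this

lemma dot_normalOf (u v : Pt) : dot u (normalOf v) = ‖v‖⁻¹ * (u 1 * v 0 - u 0 * v 1) := by
  simp [dot, normalOf, pt, PiLp.smul_apply, smul_eq_mul]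
  ring

lemma dot_add_left (u v w : Pt) : dot (u + v) w = dot u w + dot v w := by
  simp [dot, PiLp.add_apply]; ring

lemma dot_smul_left (c : ℝ) (u w : Pt) : dot (c • u) w = c * dot u w := by
  simp [dot, PiLp.smul_apply, smul_eq_mul]; ring

lemma dot_normalOf_parallel (c d : ℝ) (v : Pt) : dot (c • v) (normalOf (d • v)) = 0 := by
  rw [dot_normalOf]; simp only [PiLp.smul_apply, smul_eq_mul]; ring

lemma dot_smul_normalOf (c : ℝ) (v : Pt) : dot (c • v) (normalOf v) = 0 := by
  simpa using dot_normalOf_parallel c 1 v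

lemma pickPt_mem {S : Set Pt} (h : S.Nonempty) : pickPt S ∈ S := by
  rw [pickPt, dif_pos h]; exact h.choose_spec

lemma pickR_mem {S : Set ℝ} (h : S.Nonempty) : pickR S ∈ S := by
  rw [pickR, dif_pos h]; exact h.choose_spec

lemma pickPt_not (S : Set Pt) (h : ¬ S.Nonempty) : pickPt S = 0 := by
  rw [pickPt, dif_neg h]

lemma dot_self_normalOf (v : Pt) : dot v (normalOf v) = 0 := by
  simpa using dot_smul_normalOf 1 v

lemma cg_tChain {N : ℕ} (F : Beam N) (t : ℝ) (k : ℕ) (h1 : 1 ≤ k) (h2 : k ≤ N + 1) :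
    cg (tChain F t) k = impact F t (k - 1) := by
  rw [cg, dif_pos (by omega : k < N + 2)]
  show (if k = 0 then _ else impact F t (k - 1)) = _
  rw [if_neg (by omega)]

lemma cg_tChain_zero {N : ℕ} (F : Beam N) (t : ℝ) :
    cg (tChain F t) 0 = impact F t 0 + pt (-1) 0 := by
  rw [cg, dif_pos (by omega : 0 < N + 2)]
  show (if (0:ℕ) = 0 then impact F t 0 + pt (-1) 0 else _) = _
  rw [if_pos rfl]

lemma impact_succ {N : ℕ} (F : Beam N) (t : ℝ) (k : ℕ) :
    impact F t (k + 1) =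
      if (lineThrough (cg F.1 (k+1)) (cg F.1 (k+2)) ∩
          lineThrough (cg F.2 (k+1)) (cg F.2 (k+2))).Nonempty then
        pickPt (lineThrough (impact F t k)
            (pickPt (lineThrough (cg F.1 (k+1)) (cg F.1 (k+2)) ∩
              lineThrough (cg F.2 (k+1)) (cg F.2 (k+2)))) ∩
          segment ℝ (cg F.1 (k+2)) (cg F.2 (k+2)))
      else
        (1 - pickR {l : ℝ | impact F t k = (1 - l) • cg F.1 (k+1) + l • cg F.2 (k+1)}) • cg F.1 (k+2) +
          pickR {l : ℝ | impact F t k = (1 - l) • cg F.1 (k+1) + l • cg F.2 (k+1)} • cg F.2 (k+2) := rfl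

lemma zero_mem_mirror_one {N : ℕ} {F : Beam N} (hF : IsPrimaryBeam F) :
    (0 : Pt) ∈ mirror F 1 := by
  have h := hF.2.2.2.2
  have h2 : midpoint ℝ (cg F.1 1) (cg F.2 1) ∈ mirror F 1 := midpoint_mem_segment _ _
  rwa [h, pt_zero] at h2

lemma mem_lineThrough_right (p q : Pt) : q ∈ lineThrough p q :=
  ⟨1, by simp⟩

lemma impact_mem {N : ℕ} (F : Beam N) (hF : F ∈ Faisc N) {t : ℝ} (ht : t ∈ Icc (0:ℝ) 1) :
    ∀ k, k ≤ N → impact F t k ∈ mirror F (k + 1) := by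
  obtain ⟨hP, hNO, hRef⟩ := hF
  intro k
  induction k with
  | zero =>
    intro _
    exact ⟨1 - t, t, by linarith [ht.2], ht.1, by ring, rfl⟩
  | succ k ih =>
    intro hk
    have hprev : impact F t k ∈ mirror F (k + 1) := ih (by omega)
    rw [impact_succ]
    by_cases hline : (lineThrough (cg F.1 (k+1)) (cg F.1 (k+2)) ∩
        lineThrough (cg F.2 (k+1)) (cg F.2 (k+2))).Nonempty
    · rw [if_pos hline]
      set m := pickPt (lineThrough (cg F.1 (k+1)) (cg F.1 (k+2)) ∩
              lineThrough (cg F.2 (k+1)) (cg F.2 (k+2))) with hm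
      by_cases hS : (lineThrough (impact F t k) m ∩
          segment ℝ (cg F.1 (k+2)) (cg F.2 (k+2))).Nonempty
      · exact (pickPt_mem hS).2
      · exfalso
        have h0 : pickPt (lineThrough (impact F t k) m ∩
            segment ℝ (cg F.1 (k+2)) (cg F.2 (k+2))) = 0 := pickPt_not _ hS
        -- impact F t (k+1) = 0 in this case
        have himp : impact F t (k+1) = 0 := by rw [impact_succ, if_pos hline, ← hm, h0]
        have h0m : (0 : Pt) ∈ mirror F 1 := zero_mem_mirror_one hP
        rcases Nat.lt_or_ge k 1 with hk0 | hk1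
        · -- k = 0
          interval_cases k
          rcases Nat.lt_or_ge N 2 with hN1 | hN2
          · -- N = 1 : geometric argument
            have hN : N = 1 := by omega
            subst hN
            have hab : cg F.2 2 = cg F.1 2 := (hP.2.2.2.1).symm
            have hseg : segment ℝ (cg F.1 2) (cg F.2 2) = {cg F.1 2} := by
              rw [hab, segment_same]
            have hnotline : cg F.1 2 ∉ lineThrough (impact F t 0) m := by
              intro hmem
              exact hS ⟨cg F.1 2, hmem, by rw [hseg]; rfl⟩
            have hmne : m ≠ cg F.1 2 := by
              intro h
              exact hnotline (h ▸ mem_lineThrough_right _ _)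
            have hmmem := pickPt_mem hline
            rw [← hm] at hmmem
            obtain ⟨⟨u, hu⟩, ⟨w, hw⟩⟩ := hmmem
            rw [hab] at hw
            -- cg F.1 2 - m = (1-u) • (cg F.1 2 - cg F.1 1), etc.
            have e1 : cg F.1 2 - m = (1 - u) • (cg F.1 2 - cg F.1 1) := by
              rw [hu]; module
            have e2 : cg F.1 2 - m = (1 - w) • (cg F.1 2 - cg F.2 1) := by
              rw [hw]; module
            have hu1 : (1 : ℝ) - u ≠ 0 := by
              intro h
              apply hmne
              have : cg F.1 2 - m = 0 := by rw [e1, h, zero_smul]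
              have := sub_eq_zero.mp this
              exact this.symm
            -- so cg F.1 2 - cg F.1 1 = c • v with v = cg F.1 2 - cg F.2 1
            have e3 : cg F.1 2 - cg F.1 1 = ((1-u)⁻¹ * (1-w)) • (cg F.1 2 - cg F.2 1) := by
              rw [mul_smul, ← e2, e1, smul_smul, inv_mul_cancel₀ hu1, one_smul]
            have e4 : cg F.2 1 - cg F.1 1 = ((1-u)⁻¹ * (1-w) - 1) • (cg F.1 2 - cg F.2 1) := by
              have : cg F.2 1 - cg F.1 1 = (cg F.1 2 - cg F.1 1) - (cg F.1 2 - cg F.2 1) := by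
                module
              rw [this, e3]; module
            have hz : dot (cg F.1 (1 + 1) - cg F.1 1) (normalOf (cg F.2 1 - cg F.1 1)) = 0 := by
              show dot (cg F.1 2 - cg F.1 1) _ = 0
              rw [e3, e4]
              exact dot_normalOf_parallel _ _ _
            have href := (hRef 1 le_rfl le_rfl).2.1
            rw [hz, mul_zero] at href
            exact lt_irrefl 0 href
          · -- N ≥ 2 : use NonObscuration with j = 2, k = 1
            have hray := hNO 2 (by omega) t ht 1 le_rfl (by omega) (by omega) (by omega)
            have h2 : cg (tChain F t) 2 = (0 : Pt) := by
              rw [cg_tChain F t 2 (by omega) (by omega)]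
              exact himp
            have : (0 : Pt) ∈ ray (tChain F t) 2 ∩ mirror F 1 := by
              refine ⟨?_, h0m⟩
              rw [ray, if_neg (by omega)]
              rw [← h2] at *
              exact left_mem_segment ℝ _ _
            rw [hray] at this
            exact this
        · -- k ≥ 1 : use NonObscuration with j = k+1, k' = 1
          have hray := hNO (k+1) (by omega) t ht 1 le_rfl (by omega) (by omega) (by omega)
          have h2 : cg (tChain F t) (k+2) = (0 : Pt) := by
            rw [cg_tChain F t (k+2) (by omega) (by omega)]
            exact himp
          have : (0 : Pt) ∈ ray (tChain F t) (k+1) ∩ mirror F 1 := by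
            refine ⟨?_, h0m⟩
            rw [ray, if_neg (by omega)]
            rw [← h2]
            exact right_mem_segment ℝ _ _
          rw [hray] at this
          exact this
    · rw [if_neg hline]
      obtain ⟨α, β, hα, hβ, hαβ, hsum⟩ := hprev
      have hβS : β ∈ {l : ℝ | impact F t k = (1 - l) • cg F.1 (k+1) + l • cg F.2 (k+1)} := by
        show impact F t k = _
        rw [← hsum]
        congr 1
        rw [show (1:ℝ) - β = α by linarith]
      have hne : (setOf fun l : ℝ => impact F t k = (1 - l) • cg F.1 (k+1) + l • cg F.2 (k+1)).Nonempty := ⟨β, hβS⟩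
      have hl := pickR_mem hne
      set l := pickR {l : ℝ | impact F t k = (1 - l) • cg F.1 (k+1) + l • cg F.2 (k+1)} with hldef
      have heq : (l - β) • (cg F.2 (k+1) - cg F.1 (k+1)) = 0 := by
        have h1 : impact F t k = (1 - l) • cg F.1 (k+1) + l • cg F.2 (k+1) := hl
        have h2 : impact F t k = (1 - β) • cg F.1 (k+1) + β • cg F.2 (k+1) := hβS
        have h3 := h1.symm.trans h2
        have : (l - β) • (cg F.2 (k+1) - cg F.1 (k+1)) =
            ((1 - l) • cg F.1 (k+1) + l • cg F.2 (k+1)) -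
            ((1 - β) • cg F.1 (k+1) + β • cg F.2 (k+1)) := by module
        rw [this, h3, sub_self]
      have hne2 : cg F.2 (k+1) - cg F.1 (k+1) ≠ 0 :=
        sub_ne_zero.mpr (Ne.symm (hP.1 (k+1) (by omega) hk))
      have hlβ : l = β := by
        rcases smul_eq_zero.mp heq with h | h
        · linarith [sub_eq_zero.mp h]
        · exact absurd h hne2
      rw [hlβ]
      exact ⟨1 - β, β, by linarith, hβ, by ring, rfl⟩

set_option maxHeartbeats 1600000 in
/-- every `t`-polygonal chain of a beam is obscuration-free and
non-grazing. -/
theorem statement7 (N : ℕ) (hN : 1 ≤ N) (F : Beam N) (hF : F ∈ Faisc N) :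
    ∀ t ∈ Icc (0 : ℝ) 1, tChain F t ∈ LO N := by
  intro t ht
  obtain ⟨hP, hNO, hRef⟩ := hF
  have hF' : F ∈ Faisc N := ⟨hP, hNO, hRef⟩
  set c := tChain F t with hc
  have hmir : ∀ k, 1 ≤ k → k ≤ N + 1 → cg c k ∈ mirror F k := by
    intro k h1 h2
    rw [hc, cg_tChain F t k h1 h2]
    have h3 := impact_mem F hF' ht (k-1) (by omega)
    rwa [Nat.sub_add_cancel h1] at h3
  refine ⟨?_, ?_⟩
  · -- not obscured
    intro hobs
    rcases (hobs : _ ∨ _) with h01 | ⟨j, k, hj, hk1, hk2, hkj, hkj1, hmem⟩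
    · rw [hc, cg_tChain_zero, cg_tChain F t 1 le_rfl (by omega)] at h01
      have h2 : impact F t 0 + pt (-1) 0 = impact F t 0 + 0 := by
        rw [add_zero]; exact h01
      exact pt_ne (add_left_cancel h2)
    · have hNOjk := hNO j hj t ht k hk1 hk2 hkj hkj1
      have hm := hmir k hk1 hk2
      have hbad : cg c k ∈ ray (tChain F t) j ∩ mirror F k := ⟨hmem, hm⟩
      rw [hNOjk] at hbad
      exact hbad
  · -- not grazing
    intro hgr
    obtain ⟨i, hi1, hiN, hmem⟩ := (hgr : ∃ i, _)
    set n := normalOf (cg F.2 i - cg F.1 i) with hn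
    set x := dot (cg F.1 (i - 1) - cg F.1 i) n with hxdef
    set y := dot (cg F.2 (i - 1) - cg F.2 i) n with hydef
    set z := dot (cg F.1 (i + 1) - cg F.1 i) n with hzdef
    set w := dot (cg F.2 (i + 1) - cg F.2 i) n with hwdef
    have href : 0 < x * y ∧ 0 < x * z ∧ 0 < x * w := hRef i hi1 hiN
    obtain ⟨hxy, hxz, hxw⟩ := href
    have key0 : ∀ p ∈ mirror F i, dot (p - cg F.1 i) n = 0 := by
      rintro p ⟨α, β, hα, hβ, hαβ, rfl⟩
      have e : α • cg F.1 i + β • cg F.2 i - cg F.1 i = β • (cg F.2 i - cg F.1 i) := by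
        rw [show α = 1 - β by linarith]; module
      rw [e, hn]; exact dot_smul_normalOf β _
    have keyplus : 0 < x * dot (cg c (i+1) - cg F.1 i) n := by
      obtain ⟨α, β, hα, hβ, hαβ, hp⟩ := hmir (i+1) (by omega) (by omega)
      have e : cg c (i+1) - cg F.1 i = α • (cg F.1 (i+1) - cg F.1 i) +
          β • (cg F.2 (i+1) - cg F.2 i) + β • (cg F.2 i - cg F.1 i) := by
        rw [← hp, show α = 1 - β by linarith]; module
      have hd : dot (cg c (i+1) - cg F.1 i) n = α * z + β * w := by
        rw [e, dot_add_left, dot_add_left, dot_smul_left, dot_smul_left, dot_smul_left,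
          hn, dot_self_normalOf, ← hzdef, ← hwdef]
        ring
      rw [hd]
      rcases lt_or_eq_of_le hα with h | h
      · nlinarith [mul_nonneg hβ hxw.le]
      · have hβ1 : β = 1 := by linarith
        rw [← h, hβ1]; nlinarith
    have keyminus : 0 < x * dot (cg c (i-1) - cg F.1 i) n := by
      rcases Nat.lt_or_ge i 2 with h2 | h2
      · -- i = 1
        have hi : i = 1 := by omega
        subst hi
        have hc1 : cg c 1 ∈ mirror F 1 := hmir 1 le_rfl (by omega)
        have hc0 : cg c 0 = cg c 1 + pt (-1) 0 := by
          rw [hc, cg_tChain_zero, cg_tChain F t 1 le_rfl (by omega)]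
        have hd0 : dot (cg c 0 - cg F.1 1) n =
            dot (pt (-1) 0) n + dot (cg c 1 - cg F.1 1) n := by
          rw [← dot_add_left, hc0, show cg c 1 + pt (-1) 0 - cg F.1 1 =
            pt (-1) 0 + (cg c 1 - cg F.1 1) by module]
        have h1 : dot (cg c 1 - cg F.1 1) n = 0 := key0 _ hc1
        have hmid : midpoint ℝ (cg F.1 1) (cg F.2 1) = 0 := by
          rw [hP.2.2.2.2, pt_zero]
        have hadd : cg F.1 1 + cg F.2 1 = 0 := by
          have h3 := midpoint_add_self ℝ (cg F.1 1) (cg F.2 1)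
          rw [hmid, add_zero] at h3
          exact h3.symm
        have hb1 : cg F.2 1 = -cg F.1 1 := by
          rw [← zero_sub, ← hadd]; module
        have hxy2 : x + y = 2 * dot (pt (-1) 0) n := by
          rw [hxdef, hydef]
          show dot (cg F.1 0 - cg F.1 1) n + dot (cg F.2 0 - cg F.2 1) n = _
          rw [hP.2.1, hP.2.2.1, hb1, ← dot_add_left,
            show pt (-1) 0 - cg F.1 1 + (pt (-1) 0 - -cg F.1 1) = (2:ℝ) • pt (-1) 0 by module,
            dot_smul_left]
        have hval : dot (cg c 0 - cg F.1 1) n = (x + y) / 2 := by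
          rw [hd0, h1, add_zero, hxy2]; ring
        show 0 < x * dot (cg c 0 - cg F.1 1) n
        rw [hval]
        nlinarith [hxy, sq_nonneg x]
      · -- i ≥ 2
        obtain ⟨α, β, hα, hβ, hαβ, hp⟩ := hmir (i-1) (by omega) (by omega)
        have hi1' : i - 1 + 1 = i := by omega
        have e : cg c (i-1) - cg F.1 i = α • (cg F.1 (i-1) - cg F.1 i) +
            β • (cg F.2 (i-1) - cg F.2 i) + β • (cg F.2 i - cg F.1 i) := by
          rw [← hp, show α = 1 - β by linarith]; module
        have hd : dot (cg c (i-1) - cg F.1 i) n = α * x + β * y := by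
          rw [e, dot_add_left, dot_add_left, dot_smul_left, dot_smul_left, dot_smul_left,
            hn, dot_self_normalOf, ← hxdef, ← hydef]
          ring
        rw [hd]
        have hxne : x ≠ 0 := by intro h0; rw [h0, zero_mul] at hxy; exact lt_irrefl 0 hxy
        rcases lt_or_eq_of_le hα with h | h
        · nlinarith [mul_nonneg hβ hxy.le, mul_pos h (mul_self_pos.mpr hxne)]
        · have hβ1 : β = 1 := by linarith
          rw [← h, hβ1]; nlinarith
    -- conclude
    obtain ⟨s, r, hs, hr, hsr, hcomb⟩ := hmem
    have hz0 : dot (cg c i - cg F.1 i) n = 0 := key0 _ (hmir i hi1 (by omega))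
    have he : cg c i - cg F.1 i =
        s • (cg c (i-1) - cg F.1 i) + r • (cg c (i+1) - cg F.1 i) := by
      rw [← hcomb, show s = 1 - r by linarith]; module
    rw [he, dot_add_left, dot_smul_left, dot_smul_left] at hz0
    have hx0 : s * (x * dot (cg c (i-1) - cg F.1 i) n) +
        r * (x * dot (cg c (i+1) - cg F.1 i) n) = 0 := by linear_combination x * hz0
    nlinarith [mul_pos hs keyminus, mul_pos hr keyplus]
end
end

section
/- Let N ≥ 1 and let F = ((a_i),(b_i)) ∈ Faisc^N(ℝ²) be an N-beam. Then for all t, t' ∈ [0,1], the t-polygonal chain P_t and the t'-polygonal chain P_{t'} of F lie in the same path-connected component of LO^N(ℝ²); in particular the two extremal chains (a_i) = P_0 and (b_i) = P_1 lie in the same path-connected component of LO^N(ℝ²). -/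
open Real Set
open scoped Classical

noncomputable section

namespace S9

def cross (u v : Pt) : ℝ := u 0 * v 1 - u 1 * v 0

lemma pt0 (x y : ℝ) : pt x y 0 = x := by simp [pt]
lemma pt1 (x y : ℝ) : pt x y 1 = y := by simp [pt]

lemma Pt_ext {u v : Pt} (h0 : u 0 = v 0) (h1 : u 1 = v 1) : u = v := by
  ext i; fin_cases i <;> assumption

lemma Pt_ne_zero_iff {u : Pt} : u ≠ 0 ↔ u 0 ≠ 0 ∨ u 1 ≠ 0 := by
  constructor
  · intro h
    by_contra hc
    push_neg at hc
    exact h (Pt_ext (by simpa using hc.1) (by simpa using hc.2))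
  · rintro (h | h) rfl <;> simp at h

lemma exists_smul_of_cross_eq_zero {v w : Pt} (hv : v ≠ 0) (h : cross v w = 0) :
    ∃ r : ℝ, w = r • v := by
  rw [Pt_ne_zero_iff] at hv
  rw [cross] at h
  rcases hv with h0 | h0
  · refine ⟨w 0 / v 0, Pt_ext ?_ ?_⟩ <;> simp <;> field_simp <;> nlinarith [h]
  · refine ⟨w 1 / v 1, Pt_ext ?_ ?_⟩ <;> simp <;> field_simp <;> nlinarith [h]

lemma mem_lineThrough_iff {p q x : Pt} (h : q ≠ p) :
    x ∈ lineThrough p q ↔ cross (q - p) (x - p) = 0 := by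
  constructor
  · rintro ⟨u, rfl⟩
    simp [cross]; ring
  · intro hc
    obtain ⟨r, hr⟩ := exists_smul_of_cross_eq_zero (sub_ne_zero.mpr h) hc
    exact ⟨r, by rw [← hr]; abel⟩

lemma mem_lineThrough_self (p q : Pt) : p ∈ lineThrough p q := ⟨0, by simp⟩
lemma mem_lineThrough_right (p q : Pt) : q ∈ lineThrough p q := ⟨1, by simp⟩

lemma cross_eq_zero_of_parallel {v w : Pt} (r : ℝ) (h : w = r • v) : cross v w = 0 := by
  subst h; simp [cross]; ring

/-- Two directions vanish on `w`, directions independent ⇒ `w = 0`. -/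
lemma eq_zero_of_two_cross {v v' w : Pt} (h1 : cross v w = 0) (h2 : cross v' w = 0)
    (h : cross v v' ≠ 0) : w = 0 := by
  rw [cross] at h1 h2 h
  have e0 : (v 0 * v' 1 - v 1 * v' 0) * w 0 = 0 := by linear_combination (v' 0) * h1 - (v 0) * h2
  have e1 : (v 0 * v' 1 - v 1 * v' 0) * w 1 = 0 := by linear_combination (v' 1) * h1 - (v 1) * h2
  refine Pt_ext ?_ ?_ <;> simp
  · exact (mul_eq_zero.mp e0).resolve_left h
  · exact (mul_eq_zero.mp e1).resolve_left h

/-- Intersection of two non-parallel lines is a single explicit point. -/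
lemma inter_lines {p q a b : Pt} (h : cross (q - p) (b - a) ≠ 0) :
    lineThrough p q ∩ lineThrough a b =
      {p + (cross (a - p) (b - a) / cross (q - p) (b - a)) • (q - p)} := by
  have hba : b ≠ a := by
    rintro rfl; apply h; simp [cross]
  ext x
  simp only [Set.mem_inter_iff, Set.mem_singleton_iff]
  constructor
  · rintro ⟨⟨u, rfl⟩, hx2⟩
    rw [mem_lineThrough_iff hba] at hx2
    have hu : u = cross (a - p) (b - a) / cross (q - p) (b - a) := by
      rw [eq_div_iff h]
      simp only [cross] at hx2 ⊢
      simp only [PiLp.sub_apply, PiLp.add_apply, PiLp.smul_apply, smul_eq_mul] at hx2 ⊢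
      linear_combination -hx2
    rw [hu]
  · rintro rfl
    refine ⟨⟨_, rfl⟩, ?_⟩
    rw [mem_lineThrough_iff hba]
    simp only [cross] at h ⊢
    simp only [PiLp.sub_apply, PiLp.add_apply, PiLp.smul_apply, smul_eq_mul] at h ⊢
    linear_combination (-((a 0 - p 0) * (b 1 - a 1) - (a 1 - p 1) * (b 0 - a 0))) * inv_mul_cancel₀ h

end S9
namespace S9

lemma pickPt_mem {S : Set Pt} (h : S.Nonempty) : pickPt S ∈ S := by
  rw [pickPt, dif_pos h]; exact h.choose_spec

lemma pickR_mem {S : Set ℝ} (h : S.Nonempty) : pickR S ∈ S := by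
  rw [pickR, dif_pos h]; exact h.choose_spec

lemma pickPt_empty {S : Set Pt} (h : ¬ S.Nonempty) : pickPt S = 0 := by
  rw [pickPt, dif_neg h]

lemma mem_segment_iff {a b x : Pt} :
    x ∈ segment ℝ a b ↔ ∃ l : ℝ, 0 ≤ l ∧ l ≤ 1 ∧ x = (1 - l) • a + l • b := by
  rw [segment_eq_image ℝ a b]
  constructor
  · rintro ⟨l, hl, rfl⟩; exact ⟨l, hl.1, hl.2, rfl⟩
  · rintro ⟨l, h0, h1, rfl⟩; exact ⟨l, ⟨h0, h1⟩, rfl⟩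

lemma segment_subset_lineThrough {a b : Pt} : segment ℝ a b ⊆ lineThrough a b := by
  intro x hx
  obtain ⟨l, _, _, rfl⟩ := mem_segment_iff.mp hx
  exact ⟨l, by module⟩

lemma dot_sub_smul (p u v w : Pt) (l : ℝ) :
    dot ((1 - l) • u + l • v - p) w = (1 - l) * dot (u - p) w + l * dot (v - p) w := by
  simp only [dot, PiLp.sub_apply, PiLp.add_apply, PiLp.smul_apply, smul_eq_mul]
  ring

lemma dot_shift (u v p w : Pt) (h : dot (v - u) w = 0) : dot (p - u) w = dot (p - v) w := by
  simp only [dot, PiLp.sub_apply] at h ⊢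
  linarith

lemma dot_normalOf (u w : Pt) : dot w (normalOf u) = ‖u‖⁻¹ * cross u w := by
  simp only [dot, normalOf, cross, PiLp.smul_apply, smul_eq_mul, pt0, pt1]
  ring

lemma dot_self_pos {w : Pt} (h : w ≠ 0) : 0 < dot w w := by
  rw [Pt_ne_zero_iff] at h
  rw [dot]
  rcases h with h | h <;>
    nlinarith [mul_self_pos.mpr h, mul_self_nonneg (w 0), mul_self_nonneg (w 1)]

lemma convex_pos {x y : ℝ} (hx : 0 < x) (hy : 0 < y) {l : ℝ} (h0 : 0 ≤ l) (h1 : l ≤ 1) :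
    0 < (1 - l) * x + l * y := by
  rcases lt_or_ge l 1 with h | h
  · nlinarith [mul_nonneg h0 hy.le, mul_pos (sub_pos.mpr h) hx]
  · have l1 : l = 1 := le_antisymm h1 h
    rw [l1]; simpa using hy

/-- key sign lemma -/
lemma signKey {x y : ℝ} (hxy : 0 < x * y) {l : ℝ} (h0 : 0 ≤ l) (h1 : l ≤ 1) :
    0 < x * ((1 - l) * x + l * y) := by
  rcases mul_pos_iff.mp hxy with ⟨hx, hy⟩ | ⟨hx, hy⟩
  · exact mul_pos hx (convex_pos hx hy h0 h1)
  · have := convex_pos (neg_pos.mpr hx) (neg_pos.mpr hy) h0 h1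
    nlinarith [this]

lemma sign_trans {x z d : ℝ} (h1 : 0 < x * z) (h2 : 0 < z * d) : 0 < x * d := by
  nlinarith [mul_pos h1 h2, sq_nonneg z]

lemma mul_sign_comm {x y z : ℝ} (h1 : 0 < x * y) (h2 : 0 < x * z) : 0 < y * z := by
  nlinarith [mul_pos h1 h2, sq_nonneg x]

end S9
namespace S9

variable {N : ℕ}

noncomputable def Qpt (F : Beam N) (i : ℕ) : Pt :=
  pickPt (lineThrough (cg F.1 (i - 1)) (cg F.1 i) ∩ lineThrough (cg F.2 (i - 1)) (cg F.2 i))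

def icond (F : Beam N) (i : ℕ) : Prop :=
  (lineThrough (cg F.1 (i - 1)) (cg F.1 i) ∩ lineThrough (cg F.2 (i - 1)) (cg F.2 i)).Nonempty

noncomputable def lamf (F : Beam N) (i : ℕ) (p : Pt) : ℝ :=
  dot (p - cg F.1 (i - 1)) (cg F.2 (i - 1) - cg F.1 (i - 1)) /
    dot (cg F.2 (i - 1) - cg F.1 (i - 1)) (cg F.2 (i - 1) - cg F.1 (i - 1))

noncomputable def stepF (F : Beam N) (i : ℕ) (p : Pt) : Pt :=
  if icond F i then
    p + (cross (cg F.1 i - p) (cg F.2 i - cg F.1 i) /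
          cross (Qpt F i - p) (cg F.2 i - cg F.1 i)) • (Qpt F i - p)
  else (1 - lamf F i p) • cg F.1 i + lamf F i p • cg F.2 i

lemma impact_succ (F : Beam N) (t : ℝ) (k : ℕ) :
    impact F t (k + 1) =
      if icond F (k + 2) then
        pickPt (lineThrough (impact F t k) (Qpt F (k + 2)) ∩
          segment ℝ (cg F.1 (k + 2)) (cg F.2 (k + 2)))
      else
        (1 - pickR {l : ℝ | impact F t k =
            (1 - l) • cg F.1 (k + 1) + l • cg F.2 (k + 1)}) • cg F.1 (k + 2) +
          pickR {l : ℝ | impact F t k =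
            (1 - l) • cg F.1 (k + 1) + l • cg F.2 (k + 1)} • cg F.2 (k + 2) := rfl

lemma impact_zero (F : Beam N) (t : ℝ) :
    impact F t 0 = (1 - t) • cg F.1 1 + t • cg F.2 1 := rfl

lemma dot_mir_normal (u : Pt) : dot u (normalOf u) = 0 := by
  rw [dot_normalOf]
  have h : cross u u = 0 := by rw [cross]; ring
  rw [h, mul_zero]

/-- If `p` lies on the segment `[u,v]` and the four dot products have the same sign,
then the dot product of `p - aᵢ` with the normal has the sign of the first one. -/
lemma side (F : Beam N) (i : ℕ) {u v p : Pt}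
    (hpos : 0 < dot (u - cg F.1 i) (normalOf (cg F.2 i - cg F.1 i)) *
      dot (v - cg F.2 i) (normalOf (cg F.2 i - cg F.1 i)))
    (hp : p ∈ segment ℝ u v) :
    0 < dot (u - cg F.1 i) (normalOf (cg F.2 i - cg F.1 i)) *
      dot (p - cg F.1 i) (normalOf (cg F.2 i - cg F.1 i)) := by
  set n := normalOf (cg F.2 i - cg F.1 i)
  have hvshift : dot (v - cg F.1 i) n = dot (v - cg F.2 i) n :=
    dot_shift (cg F.1 i) (cg F.2 i) v n (dot_mir_normal _)
  obtain ⟨l, h0, h1, rfl⟩ := mem_segment_iff.mp hp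
  rw [dot_sub_smul, hvshift]
  exact signKey hpos h0 h1

/-- `p` on a mirror implies zero dot with that mirror's normal direction. -/
lemma dot_on_mirror (F : Beam N) (i : ℕ) {p : Pt} (hp : p ∈ mirror F i) :
    dot (p - cg F.1 i) (normalOf (cg F.2 i - cg F.1 i)) = 0 := by
  obtain ⟨l, h0, h1, rfl⟩ := mem_segment_iff.mp hp
  rw [dot_sub_smul]
  rw [dot_mir_normal]
  simp [dot]

lemma sidePrev (F : Beam N) (hRC : ReflexionCond F) {i : ℕ} (h1 : 1 ≤ i) (h2 : i ≤ N)
    {p : Pt} (hp : p ∈ mirror F (i - 1)) :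
    0 < dot (cg F.1 (i - 1) - cg F.1 i) (normalOf (cg F.2 i - cg F.1 i)) *
      dot (p - cg F.1 i) (normalOf (cg F.2 i - cg F.1 i)) :=
  side F i (hRC i h1 h2).1 hp

lemma sideNext (F : Beam N) (hRC : ReflexionCond F) {i : ℕ} (h1 : 1 ≤ i) (h2 : i ≤ N)
    {p : Pt} (hp : p ∈ mirror F (i + 1)) :
    0 < dot (cg F.1 (i + 1) - cg F.1 i) (normalOf (cg F.2 i - cg F.1 i)) *
      dot (p - cg F.1 i) (normalOf (cg F.2 i - cg F.1 i)) :=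
  side F i (mul_sign_comm (hRC i h1 h2).2.1 (hRC i h1 h2).2.2) hp

lemma cross_of_dot_normal_ne {u w : Pt} (h : dot w (normalOf u) ≠ 0) : cross u w ≠ 0 := by
  rw [dot_normalOf] at h
  exact fun hc => h (by rw [hc, mul_zero])

lemma ne_of_pos_mul_left {x y : ℝ} (h : 0 < x * y) : y ≠ 0 := by
  rintro rfl; simp at h

/-- strict side for previous mirror, cross form -/
lemma crossSidePrev (F : Beam N) (hRC : ReflexionCond F) {i : ℕ} (h1 : 1 ≤ i) (h2 : i ≤ N)
    {p : Pt} (hp : p ∈ mirror F (i - 1)) :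
    cross (cg F.2 i - cg F.1 i) (p - cg F.1 i) ≠ 0 :=
  cross_of_dot_normal_ne (ne_of_pos_mul_left (sidePrev F hRC h1 h2 hp))

end S9
namespace S9

variable {N : ℕ}

lemma pt00 : pt 0 0 = (0 : Pt) := Pt_ext (by simp [pt0]) (by simp [pt1])

lemma b1_eq_neg_a1 (F : Beam N) (hPB : IsPrimaryBeam F) : cg F.2 1 = -cg F.1 1 := by
  have hm := hPB.2.2.2.2
  rw [pt00] at hm
  have h2 : cg F.1 1 + cg F.2 1 = 0 := by
    have := midpoint_add_self ℝ (cg F.1 1) (cg F.2 1)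
    rw [hm, add_zero] at this
    exact this.symm
  exact eq_neg_of_add_eq_zero_right h2

lemma zeroMem (F : Beam N) (hPB : IsPrimaryBeam F) : (0 : Pt) ∈ mirror F 1 := by
  rw [mirror, mem_segment_iff]
  refine ⟨1/2, by norm_num, by norm_num, ?_⟩
  rw [b1_eq_neg_a1 F hPB]
  module

lemma cg_lt {c : Chain N} {k : ℕ} (h : k < N + 2) : cg c k = c ⟨k, h⟩ := by
  rw [cg, dif_pos h]

lemma cg_tChain (F : Beam N) (t : ℝ) {k : ℕ} (h1 : 1 ≤ k) (h2 : k ≤ N + 1) :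
    cg (tChain F t) k = impact F t (k - 1) := by
  rw [cg_lt (by omega)]
  show (if (k : ℕ) = 0 then _ else impact F t (k - 1)) = _
  rw [if_neg (by omega)]

lemma cg_tChain0 (F : Beam N) (t : ℝ) :
    cg (tChain F t) 0 = impact F t 0 + pt (-1) 0 := by
  rw [cg_lt (by omega)]
  show (if (0 : ℕ) = 0 then impact F t 0 + pt (-1) 0 else _) = _
  rw [if_pos rfl]

/-- The main induction on impact points. -/
theorem main_ind (hN : 1 ≤ N) (F : Beam N) (hF : F ∈ Faisc N)
    {t : ℝ} (ht : t ∈ Icc (0:ℝ) 1) :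
    ∀ m : ℕ, m ≤ N →
      (impact F t m ∈ mirror F (m + 1)) ∧
      (∀ k : ℕ, m = k + 1 →
        ((m < N → (impact F t m = stepF F (m + 1) (impact F t k) ∧
          (icond F (m + 1) →
            cross (Qpt F (m + 1) - impact F t k) (cg F.2 (m + 1) - cg F.1 (m + 1)) ≠ 0))) ∧
         (m = N → impact F t m = cg F.1 (N + 1)))) := by
  obtain ⟨hPB, hNO, hRC⟩ := hF
  intro m
  induction m with
  | zero =>
    intro _
    constructor
    · rw [impact_zero, mirror, mem_segment_iff]
      exact ⟨t, ht.1, ht.2, by module⟩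
    · intro k hk; omega
  | succ k ih =>
    intro hm
    have hprev : impact F t k ∈ mirror F (k + 1) := (ih (by omega)).1
    set prev := impact F t k with hprevdef
    by_cases hic : icond F (k + 2)
    · -- intersecting-lines branch
      set S := lineThrough prev (Qpt F (k + 2)) ∩
        segment ℝ (cg F.1 (k + 2)) (cg F.2 (k + 2)) with hSdef
      have himp : impact F t (k + 1) = pickPt S := by
        rw [impact_succ, if_pos hic]
      -- S is nonempty
      have hSne : S.Nonempty := by
        by_contra hS
        have h0 : impact F t (k + 1) = 0 := by rw [himp, pickPt_empty hS]
        rcases Nat.eq_zero_or_pos k with rfl | hkpos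
        · -- i = 2
          rcases Nat.lt_or_ge N 2 with hN2 | hN2
          · -- N = 1 : geometric argument, S is in fact nonempty
            have hN1 : N = 1 := by omega
            subst hN1
            apply hS
            have hend : cg F.1 2 = cg F.2 2 := hPB.2.2.2.1
            have hRC1 := hRC 1 le_rfl le_rfl
            have hz : dot (cg F.1 2 - cg F.1 1) (normalOf (cg F.2 1 - cg F.1 1)) ≠ 0 :=
              ne_of_pos_mul_left hRC1.2.1
            have hw : dot (cg F.2 2 - cg F.2 1) (normalOf (cg F.2 1 - cg F.1 1)) ≠ 0 :=
              ne_of_pos_mul_left hRC1.2.2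
            have cz : cross (cg F.2 1 - cg F.1 1) (cg F.1 2 - cg F.1 1) ≠ 0 :=
              cross_of_dot_normal_ne hz
            have cw : cross (cg F.2 1 - cg F.1 1) (cg F.1 2 - cg F.2 1) ≠ 0 := by
              rw [← hend] at hw
              exact cross_of_dot_normal_ne hw
            have hA21 : cg F.1 2 ≠ cg F.1 1 := by
              intro h; apply cz; rw [h]; simp [cross]
            have hA2B1 : cg F.1 2 ≠ cg F.2 1 := by
              intro h; apply cw; rw [h]; simp [cross]
            -- L1 ∩ L2 ⊆ {a₂}
            have hsub : lineThrough (cg F.1 1) (cg F.1 2) ∩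
                lineThrough (cg F.2 1) (cg F.2 2) ⊆ {cg F.1 2} := by
              rintro X ⟨hX1, hX2⟩
              rw [← hend] at hX2
              rw [mem_lineThrough_iff hA21] at hX1
              rw [mem_lineThrough_iff hA2B1] at hX2
              have e1 : cross (cg F.1 2 - cg F.1 1) (X - cg F.1 2) = 0 := by
                rw [cross] at hX1 ⊢
                simp only [PiLp.sub_apply] at hX1 ⊢
                linear_combination hX1
              have e2 : cross (cg F.1 2 - cg F.2 1) (X - cg F.1 2) = 0 := by
                rw [cross] at hX2 ⊢
                simp only [PiLp.sub_apply] at hX2 ⊢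
                linear_combination hX2
              have hind : cross (cg F.1 2 - cg F.1 1) (cg F.1 2 - cg F.2 1) ≠ 0 := by
                intro hc
                apply cz
                rw [cross] at hc ⊢
                simp only [PiLp.sub_apply] at hc ⊢
                linear_combination hc
              have := eq_zero_of_two_cross e1 e2 hind
              have : X = cg F.1 2 := by
                have h' := sub_eq_zero.mp this
                exact h'
              simpa using this
            have hQ : Qpt F 2 = cg F.1 2 := hsub (pickPt_mem hic)
            exact ⟨cg F.1 2, ⟨1, by rw [hQ]; module⟩, left_mem_segment ℝ _ _⟩
          · -- N ≥ 2 : use non-obscuration with j = 2, k = 1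
            have hray : (0 : Pt) ∈ ray (tChain F t) 2 := by
              rw [ray, if_neg (by norm_num)]
              have h2 : cg (tChain F t) 2 = impact F t 1 := cg_tChain F t (by omega) (by omega)
              rw [h2, h0]
              exact left_mem_segment ℝ _ _
            have hemp := hNO 2 hN2 t ht 1 le_rfl (by omega) (by omega) (by omega)
            exact (Set.eq_empty_iff_forall_notMem.mp hemp 0) ⟨hray, zeroMem F hPB⟩
        · -- i = k + 2 ≥ 3 : use non-obscuration with j = k + 1, k' = 1
          have hray : (0 : Pt) ∈ ray (tChain F t) (k + 1) := by
            rw [ray, if_neg (by omega)]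
            have h2 : cg (tChain F t) (k + 1 + 1) = impact F t (k + 1) :=
              cg_tChain F t (by omega) (by omega)
            rw [h2, h0]
            exact right_mem_segment ℝ _ _
          have hemp := hNO (k + 1) (by omega) t ht 1 le_rfl (by omega) (by omega) (by omega)
          exact (Set.eq_empty_iff_forall_notMem.mp hemp 0) ⟨hray, zeroMem F hPB⟩
      have hmem : pickPt S ∈ S := pickPt_mem hSne
      refine ⟨by rw [himp]; exact hmem.2, ?_⟩
      rintro k'' hk''
      rw [show k'' = k from by omega]
      constructor
      · -- k + 1 < N : explicit formula
        intro hlt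
        have h1i : 1 ≤ k + 2 := by omega
        have h2i : k + 2 ≤ N := by omega
        have notline : cross (cg F.2 (k + 2) - cg F.1 (k + 2)) (prev - cg F.1 (k + 2)) ≠ 0 := by
          have := crossSidePrev F hRC h1i h2i (p := prev) (by
            show prev ∈ mirror F (k + 2 - 1)
            have : k + 2 - 1 = k + 1 := rfl
            rw [this]; exact hprev)
          exact this
        have hABne : cg F.1 (k + 2) ≠ cg F.2 (k + 2) := hPB.1 (k + 2) (by omega) h2i
        have crossQ : cross (Qpt F (k + 2) - prev) (cg F.2 (k + 2) - cg F.1 (k + 2)) ≠ 0 := by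
          intro hQ0
          obtain ⟨x, hx1, hx2⟩ := hSne
          have c1 : cross (cg F.2 (k + 2) - cg F.1 (k + 2)) (x - cg F.1 (k + 2)) = 0 := by
            rw [← mem_lineThrough_iff (Ne.symm hABne)]
            exact segment_subset_lineThrough hx2
          obtain ⟨u, rfl⟩ := hx1
          apply notline
          rw [cross] at c1 hQ0 ⊢
          simp only [PiLp.sub_apply, PiLp.add_apply, PiLp.smul_apply, smul_eq_mul] at c1 hQ0 ⊢
          linear_combination c1 + u * hQ0
        have hinter := inter_lines crossQ
        have hsub : S ⊆ {prev + (cross (cg F.1 (k + 2) - prev) (cg F.2 (k + 2) - cg F.1 (k + 2)) /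
            cross (Qpt F (k + 2) - prev) (cg F.2 (k + 2) - cg F.1 (k + 2))) • (Qpt F (k + 2) - prev)} := by
          rw [← hinter]
          exact Set.inter_subset_inter_right _ segment_subset_lineThrough
        have heq : pickPt S = prev + (cross (cg F.1 (k + 2) - prev) (cg F.2 (k + 2) - cg F.1 (k + 2)) /
            cross (Qpt F (k + 2) - prev) (cg F.2 (k + 2) - cg F.1 (k + 2))) • (Qpt F (k + 2) - prev) :=
          hsub hmem
        refine ⟨?_, fun _ => crossQ⟩
        rw [himp, heq, stepF, if_pos hic]
      · -- k + 1 = N : endpoint mirror is a point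
        intro hEnd
        have h2 : (N : ℕ) + 1 = k + 2 := by omega
        have hend : cg F.1 (k + 2) = cg F.2 (k + 2) := by
          have h3 := hPB.2.2.2.1
          rw [congrArg (cg F.1) h2, congrArg (cg F.2) h2] at h3
          exact h3
        have hthis : pickPt S ∈ segment ℝ (cg F.1 (k + 2)) (cg F.2 (k + 2)) := hmem.2
        rw [← hend, segment_same] at hthis
        rw [himp, congrArg (cg F.1) h2]
        exact hthis
    · -- non-intersecting branch
      set Ls := {l : ℝ | prev = (1 - l) • cg F.1 (k + 1) + l • cg F.2 (k + 1)} with hLsdef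
      have himp : impact F t (k + 1) =
          (1 - pickR Ls) • cg F.1 (k + 2) + pickR Ls • cg F.2 (k + 2) := by
        rw [impact_succ, if_neg hic]
      obtain ⟨l0, hl00, hl01, hl0⟩ := mem_segment_iff.mp hprev
      have hABne : cg F.1 (k + 1) ≠ cg F.2 (k + 1) := hPB.1 (k + 1) (by omega) (by omega)
      have hBA : cg F.2 (k + 1) - cg F.1 (k + 1) ≠ 0 := sub_ne_zero_of_ne (Ne.symm hABne)
      have huniq : ∀ l ∈ Ls, l = l0 := by
        intro l hl
        have e : (1 - l) • cg F.1 (k + 1) + l • cg F.2 (k + 1) =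
            (1 - l0) • cg F.1 (k + 1) + l0 • cg F.2 (k + 1) := by
          rw [← hl, ← hl0]
        have hv : (l - l0) • (cg F.2 (k + 1) - cg F.1 (k + 1)) =
            ((1 - l) • cg F.1 (k + 1) + l • cg F.2 (k + 1)) -
            ((1 - l0) • cg F.1 (k + 1) + l0 • cg F.2 (k + 1)) := by module
        rw [e, sub_self] at hv
        rcases smul_eq_zero.mp hv with h | h
        · linarith [sub_eq_zero.mp h]
        · exact absurd h hBA
      have hpickR : pickR Ls = l0 := huniq _ (pickR_mem ⟨l0, hl0⟩)
      refine ⟨?_, ?_⟩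
      · rw [himp, hpickR, mirror, mem_segment_iff]
        exact ⟨l0, hl00, hl01, rfl⟩
      · rintro k'' hk''
        rw [show k'' = k from by omega]
        constructor
        · intro _
          have hdw : dot (cg F.2 (k + 1) - cg F.1 (k + 1)) (cg F.2 (k + 1) - cg F.1 (k + 1)) ≠ 0 :=
            ne_of_gt (dot_self_pos hBA)
          have hlam : lamf F (k + 2) prev = l0 := by
            rw [lamf]
            have hpa : prev - cg F.1 (k + 2 - 1) = l0 • (cg F.2 (k + 2 - 1) - cg F.1 (k + 2 - 1)) := by
              show prev - cg F.1 (k + 1) = l0 • (cg F.2 (k + 1) - cg F.1 (k + 1))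
              rw [hl0]; module
            rw [hpa]
            show dot (l0 • (cg F.2 (k + 1) - cg F.1 (k + 1))) (cg F.2 (k + 1) - cg F.1 (k + 1)) /
              dot (cg F.2 (k + 1) - cg F.1 (k + 1)) (cg F.2 (k + 1) - cg F.1 (k + 1)) = l0
            have hds : dot (l0 • (cg F.2 (k + 1) - cg F.1 (k + 1))) (cg F.2 (k + 1) - cg F.1 (k + 1)) =
                l0 * dot (cg F.2 (k + 1) - cg F.1 (k + 1)) (cg F.2 (k + 1) - cg F.1 (k + 1)) := by
              simp only [dot, PiLp.smul_apply, smul_eq_mul]; ring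
            rw [hds]
            field_simp
          rw [himp, hpickR, stepF, if_neg hic, hlam]
          exact ⟨rfl, fun h => absurd h hic⟩
        · intro hEnd
          have h2 : (N : ℕ) + 1 = k + 2 := by omega
          have hend : cg F.1 (k + 2) = cg F.2 (k + 2) := by
            have h3 := hPB.2.2.2.1
            rw [congrArg (cg F.1) h2, congrArg (cg F.2) h2] at h3
            exact h3
          rw [himp, congrArg (cg F.1) h2, ← hend]
          module

end S9
namespace S9

variable {N : ℕ}

/-- Every impact point lies on its mirror. -/
lemma MM (hN : 1 ≤ N) (F : Beam N) (hF : F ∈ Faisc N) {t : ℝ} (ht : t ∈ Icc (0:ℝ) 1)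
    {k : ℕ} (h1 : 1 ≤ k) (h2 : k ≤ N + 1) :
    cg (tChain F t) k ∈ mirror F k := by
  rw [cg_tChain F t h1 h2]
  have := (main_ind hN F hF ht (k - 1) (by omega)).1
  rwa [show k - 1 + 1 = k from by omega] at this

lemma notObs (hN : 1 ≤ N) (F : Beam N) (hF : F ∈ Faisc N) {t : ℝ} (ht : t ∈ Icc (0:ℝ) 1) :
    ¬ Obscured (tChain F t) := by
  rintro (h01 | ⟨j, k, hj, hk1, hk2, hkj, hkj1, hmem⟩)
  · rw [cg_tChain0, cg_tChain F t le_rfl (by omega)] at h01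
    have : (pt (-1) 0) 0 = (0 : Pt) 0 :=
      congrArg (fun v : Pt => v 0) (add_eq_left.mp (h01 : impact F t 0 + pt (-1) 0 = impact F t 0))
    rw [pt0] at this
    norm_num at this
  · have hNO := hF.2.1
    have hemp := hNO j hj t ht k hk1 hk2 hkj hkj1
    exact (Set.eq_empty_iff_forall_notMem.mp hemp _) ⟨hmem, MM hN F hF ht hk1 hk2⟩

lemma notGraz (hN : 1 ≤ N) (F : Beam N) (hF : F ∈ Faisc N) {t : ℝ} (ht : t ∈ Icc (0:ℝ) 1) :
    ¬ Grazing (tChain F t) := by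
  rintro ⟨i, hi1, hiN, hmem⟩
  obtain ⟨hPB, hNO, hRC⟩ := hF
  set c := tChain F t with hc
  set n := normalOf (cg F.2 i - cg F.1 i) with hn
  set x := dot (cg F.1 (i - 1) - cg F.1 i) n with hx
  -- the middle point is on the mirror
  have hDot0 : dot (cg c i - cg F.1 i) n = 0 :=
    dot_on_mirror F i (MM hN F ⟨hPB, hNO, hRC⟩ ht hi1 (by omega))
  -- the two neighbours are strictly on the same side
  have hminus : 0 < x * dot (cg c (i - 1) - cg F.1 i) n := by
    rcases Nat.lt_or_ge i 2 with hi2 | hi2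
    · -- i = 1
      have hi : i = 1 := by omega
      subst hi
      have hx1ne : x ≠ 0 := by
        have := (hRC 1 le_rfl hiN).1
        intro h; rw [← hx] at this; rw [h] at this; simp at this
      have haA1 : dot (cg F.1 1) n = 0 := by
        rw [hn, dot_normalOf, b1_eq_neg_a1 F hPB]
        have : cross (-cg F.1 1 - cg F.1 1) (cg F.1 1) = 0 := by
          rw [cross]
          simp only [PiLp.sub_apply, PiLp.neg_apply]
          ring
        rw [this, mul_zero]
      have hc0 : cg c 0 = impact F t 0 + pt (-1) 0 := cg_tChain0 F t
      have hc1 : cg c 1 = impact F t 0 := cg_tChain F t le_rfl (by omega)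
      have hD : dot (cg c 0 - cg F.1 1) n = dot (pt (-1) 0) n + dot (cg c 1 - cg F.1 1) n := by
        rw [hc0, hc1]
        simp only [dot, PiLp.sub_apply, PiLp.add_apply]
        ring
      have hx1 : x = dot (pt (-1) 0) n := by
        rw [hx, hPB.2.1]
        simp only [dot, PiLp.sub_apply] at haA1 ⊢
        linarith [haA1]
      rw [hD, ← hx1]
      have h0' : dot (cg c 1 - cg F.1 1) n = 0 := hDot0
      rw [h0', add_zero]
      exact mul_self_pos.mpr hx1ne
    · -- i ≥ 2
      have hp : cg c (i - 1) ∈ mirror F (i - 1) :=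
        MM hN F ⟨hPB, hNO, hRC⟩ ht (by omega) (by omega)
      exact sidePrev F hRC hi1 hiN hp
  have hplus : 0 < x * dot (cg c (i + 1) - cg F.1 i) n := by
    have hp : cg c (i + 1) ∈ mirror F (i + 1) :=
      MM hN F ⟨hPB, hNO, hRC⟩ ht (by omega) (by omega)
    have hnext := sideNext F hRC hi1 hiN hp
    exact sign_trans (hRC i hi1 hiN).2.1 hnext
  -- grazing contradiction
  rw [openSegment_eq_image ℝ _ _] at hmem
  obtain ⟨σ, hσ, hrep⟩ := hmem
  have hrep' : (1 - σ) • cg c (i - 1) + σ • cg c (i + 1) = cg c i := hrep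
  have hzero : (1 - σ) * dot (cg c (i - 1) - cg F.1 i) n +
      σ * dot (cg c (i + 1) - cg F.1 i) n = 0 := by
    rw [← dot_sub_smul, hrep']
    exact hDot0
  have hσ0 : 0 < σ := hσ.1
  have hσ1 : σ < 1 := hσ.2
  have hz2 : x * ((1 - σ) * dot (cg c (i - 1) - cg F.1 i) n +
      σ * dot (cg c (i + 1) - cg F.1 i) n) = 0 := by rw [hzero, mul_zero]
  nlinarith [mul_pos (sub_pos.mpr hσ1) hminus, mul_pos hσ0 hplus, hz2]

lemma chainLO (hN : 1 ≤ N) (F : Beam N) (hF : F ∈ Faisc N) {t : ℝ} (ht : t ∈ Icc (0:ℝ) 1) :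
    tChain F t ∈ LO N :=
  ⟨notObs hN F hF ht, notGraz hN F hF ht⟩

end S9
namespace S9

variable {N : ℕ}

lemma contAux {Q a m p0 : Pt} (h : cross (Q - p0) m ≠ 0) :
    ContinuousAt (fun p : Pt => p + (cross (a - p) m / cross (Q - p) m) • (Q - p)) p0 := by
  have hnum : Continuous fun p : Pt => cross (a - p) m := by
    simp only [cross, PiLp.sub_apply]
    exact (((continuous_const.sub (PiLp.continuous_apply (p := 2) (β := fun _ : Fin 2 => ℝ) 0)).mul continuous_const).sub
      ((continuous_const.sub (PiLp.continuous_apply (p := 2) (β := fun _ : Fin 2 => ℝ) 1)).mul continuous_const))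
  have hden : Continuous fun p : Pt => cross (Q - p) m := by
    simp only [cross, PiLp.sub_apply]
    exact (((continuous_const.sub (PiLp.continuous_apply (p := 2) (β := fun _ : Fin 2 => ℝ) 0)).mul continuous_const).sub
      ((continuous_const.sub (PiLp.continuous_apply (p := 2) (β := fun _ : Fin 2 => ℝ) 1)).mul continuous_const))
  have h1 : ContinuousAt (fun p : Pt => cross (a - p) m / cross (Q - p) m) p0 :=
    (hnum.continuousAt).div (hden.continuousAt) h
  exact continuousAt_id.add (h1.smul (continuous_const.sub continuous_id).continuousAt)

lemma contImpact (hN : 1 ≤ N) (F : Beam N) (hF : F ∈ Faisc N) :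
    ∀ m : ℕ, m ≤ N → ContinuousOn (fun t => impact F t m) (Icc (0:ℝ) 1) := by
  intro m
  induction m with
  | zero =>
    intro _
    have he : (fun t : ℝ => impact F t 0) =
        fun t : ℝ => (1 - t) • cg F.1 1 + t • cg F.2 1 := rfl
    rw [he]
    exact (((continuous_const.sub continuous_id).smul continuous_const).add
      (continuous_id.smul continuous_const)).continuousOn
  | succ k ih =>
    intro hm
    rcases Nat.lt_or_ge (k + 1) N with hlt | hge
    · -- strict interior step: impact = stepF ∘ impact k on Icc
      have ihc := ih (by omega)
      apply ContinuousOn.congr (f := fun t => stepF F (k + 2) (impact F t k))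
      · intro t0 ht0
        have hP : ContinuousWithinAt (fun t => impact F t k) (Icc (0:ℝ) 1) t0 := ihc t0 ht0
        have hG : ContinuousAt (stepF F (k + 2)) (impact F t0 k) := by
          by_cases hic : icond F (k + 2)
          · have hden := (((main_ind hN F hF ht0 (k + 1) (by omega)).2 k rfl).1 hlt).2 hic
            have hfe : stepF F (k + 2) = fun p =>
                p + (cross (cg F.1 (k + 2) - p) (cg F.2 (k + 2) - cg F.1 (k + 2)) /
                  cross (Qpt F (k + 2) - p) (cg F.2 (k + 2) - cg F.1 (k + 2))) •
                    (Qpt F (k + 2) - p) := by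
              funext p; rw [stepF, if_pos hic]
            rw [hfe]
            exact contAux hden
          · have hfe : stepF F (k + 2) = fun p =>
                (1 - lamf F (k + 2) p) • cg F.1 (k + 2) + lamf F (k + 2) p • cg F.2 (k + 2) := by
              funext p; rw [stepF, if_neg hic]
            rw [hfe]
            have hnum : Continuous fun p : Pt =>
                dot (p - cg F.1 (k + 1)) (cg F.2 (k + 1) - cg F.1 (k + 1)) := by
              simp only [dot, PiLp.sub_apply]
              exact ((((PiLp.continuous_apply (p := 2) (β := fun _ : Fin 2 => ℝ) 0).sub continuous_const).mul continuous_const).add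
                (((PiLp.continuous_apply (p := 2) (β := fun _ : Fin 2 => ℝ) 1).sub continuous_const).mul continuous_const))
            have hlam : Continuous fun p : Pt => lamf F (k + 2) p := by
              have hfe2 : (fun p : Pt => lamf F (k + 2) p) = fun p : Pt =>
                  dot (p - cg F.1 (k + 1)) (cg F.2 (k + 1) - cg F.1 (k + 1)) /
                    dot (cg F.2 (k + 1) - cg F.1 (k + 1)) (cg F.2 (k + 1) - cg F.1 (k + 1)) := rfl
              rw [hfe2]
              exact hnum.div_const _
            exact (((continuous_const.sub hlam).smul continuous_const).add
              (hlam.smul continuous_const)).continuousAt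
        have hcomp := ContinuousAt.comp_continuousWithinAt (f := fun t => impact F t k)
          (g := stepF F (k + 2)) (x := t0) (s := Icc (0:ℝ) 1) hG hP
        exact hcomp
      · intro t0 ht0
        exact (((main_ind hN F hF ht0 (k + 1) (by omega)).2 k rfl).1 hlt).1
    · -- last step: constant
      have hEnd : k + 1 = N := by omega
      apply ContinuousOn.congr (f := fun _ : ℝ => cg F.1 (N + 1)) continuousOn_const
      intro t0 ht0
      exact ((main_ind hN F hF ht0 (k + 1) (by omega)).2 k rfl).2 hEnd

lemma contChain (hN : 1 ≤ N) (F : Beam N) (hF : F ∈ Faisc N) :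
    ContinuousOn (fun t => tChain F t) (Icc (0:ℝ) 1) := by
  apply continuousOn_pi.mpr
  intro i
  by_cases h : (i : ℕ) = 0
  · have he : (fun t : ℝ => tChain F t i) = fun t : ℝ => impact F t 0 + pt (-1) 0 := by
      funext t; show (if (i : ℕ) = 0 then _ else _) = _; rw [if_pos h]
    rw [he]
    exact (contImpact hN F hF 0 (by omega)).add continuousOn_const
  · have he : (fun t : ℝ => tChain F t i) = fun t : ℝ => impact F t ((i : ℕ) - 1) := by
      funext t; show (if (i : ℕ) = 0 then _ else _) = _; rw [if_neg h]
    rw [he]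
    exact contImpact hN F hF ((i : ℕ) - 1) (by omega)

end S9
/-- all `t`-polygonal chains of a beam lie in the same
path-connected component of `LO^N`; in particular the two extremal chains do. -/
theorem statement9 (N : ℕ) (hN : 1 ≤ N) (F : Beam N) (hF : F ∈ Faisc N) :
    (∀ t ∈ Icc (0 : ℝ) 1, ∀ t' ∈ Icc (0 : ℝ) 1,
      JoinedIn (LO N) (tChain F t) (tChain F t')) ∧
    JoinedIn (LO N) (tChain F 0) (tChain F 1) := by
  have main : ∀ t ∈ Icc (0 : ℝ) 1, ∀ t' ∈ Icc (0 : ℝ) 1,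
      JoinedIn (LO N) (tChain F t) (tChain F t') := by
    intro t ht t' ht'
    have hφc : Continuous fun s : unitInterval => (1 - (s : ℝ)) * t + (s : ℝ) * t' := by
      have : Continuous fun s : unitInterval => (s : ℝ) := continuous_subtype_val
      continuity
    have hφm : ∀ s : unitInterval, (1 - (s : ℝ)) * t + (s : ℝ) * t' ∈ Icc (0 : ℝ) 1 := by
      intro s
      constructor
      · nlinarith [s.2.1, s.2.2, ht.1, ht.2, ht'.1, ht'.2]
      · nlinarith [s.2.1, s.2.2, ht.1, ht.2, ht'.1, ht'.2]
    refine ⟨⟨⟨fun s => tChain F ((1 - (s : ℝ)) * t + (s : ℝ) * t'), ?_⟩, ?_, ?_⟩, ?_⟩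
    · exact (S9.contChain hN F hF).comp_continuous hφc hφm
    · show tChain F ((1 - ((0 : unitInterval) : ℝ)) * t + ((0 : unitInterval) : ℝ) * t') = tChain F t
      norm_num
    · show tChain F ((1 - ((1 : unitInterval) : ℝ)) * t + ((1 : unitInterval) : ℝ) * t') = tChain F t'
      norm_num
    · intro s
      exact S9.chainLO hN F hF (hφm s)
  exact ⟨main, main 0 (by norm_num) 1 (by norm_num)⟩
end
end

section
/- Let N ≥ 1 and let F, F' ∈ Faisc^N(ℝ²) be N-beams joined by a continuous path γ : [0,1] → Faisc^N(ℝ²) with γ(0) = F and γ(1) = F'. Then M(F) and M(F') lie in the same path-connected component of LO^N(ℝ²), and Car^F(F) = Car^F(F'). -/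
open Real Set
open scoped Classical

noncomputable section

-- ===== auxiliary development =====
namespace S10

/-- 2D cross product. -/
def c2 (u v : Pt) : ℝ := u 0 * v 1 - u 1 * v 0

lemma c2_self (u : Pt) : c2 u u = 0 := by simp [c2]; ring

lemma pt_ext {u v : Pt} (h0 : u 0 = v 0) (h1 : u 1 = v 1) : u = v := by
  ext i; fin_cases i <;> assumption

lemma mem_lineThrough_iff {p q x : Pt} (hpq : p ≠ q) :
    x ∈ lineThrough p q ↔ c2 (x - p) (q - p) = 0 := by
  constructor
  · rintro ⟨u, rfl⟩
    simp [c2]; ring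
  · intro h
    have hne : q 0 - p 0 ≠ 0 ∨ q 1 - p 1 ≠ 0 := by
      by_contra hc
      push_neg at hc
      exact hpq (pt_ext (by linarith [hc.1]) (by linarith [hc.2])).symm
    have h' : (x 0 - p 0) * (q 1 - p 1) - (x 1 - p 1) * (q 0 - p 0) = 0 := by
      simpa [c2] using h
    rcases hne with h0 | h0
    · refine ⟨(x 0 - p 0) / (q 0 - p 0), ?_⟩
      apply pt_ext <;> simp <;> field_simp
      · ring
      · linear_combination -h'
    · refine ⟨(x 1 - p 1) / (q 1 - p 1), ?_⟩
      apply pt_ext <;> simp <;> field_simp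
      · linear_combination h'
      · ring

lemma pickPt_eq {S : Set Pt} {x : Pt} (hx : x ∈ S) (hu : ∀ y ∈ S, y = x) :
    pickPt S = x := by
  have hne : S.Nonempty := ⟨x, hx⟩
  rw [pickPt, dif_pos hne]
  exact hu _ hne.choose_spec

lemma pickR_eq {S : Set ℝ} {x : ℝ} (hx : x ∈ S) (hu : ∀ y ∈ S, y = x) :
    pickR S = x := by
  have hne : S.Nonempty := ⟨x, hx⟩
  rw [pickR, dif_pos hne]
  exact hu _ hne.choose_spec

end S10
namespace S10

def q2v (A B A' B' : Pt) : ℝ := c2 (A' - A) (B' - B)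

noncomputable def qv (A B A' B' : Pt) : Pt := c2 B B' • (A' - A) - c2 A A' • (B' - B)

noncomputable def Dv (A B A' B' P : Pt) : Pt := qv A B A' B' - q2v A B A' B' • P

noncomputable def stepPt (A B A' B' P : Pt) : Pt :=
  P + (c2 (A' - P) (B' - A') / c2 (Dv A B A' B' P) (B' - A')) • Dv A B A' B' P

noncomputable def impact' {N : ℕ} (G : Beam N) : ℕ → Pt
  | 0 => midpoint ℝ (cg G.1 1) (cg G.2 1)
  | (m+1) => stepPt (cg G.1 (m+1)) (cg G.2 (m+1)) (cg G.1 (m+2)) (cg G.2 (m+2)) (impact' G m)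

lemma c2_smul_left (r : ℝ) (x y : Pt) : c2 (r • x) y = r * c2 x y := by simp [c2]; ring
lemma c2_smul_right (r : ℝ) (x y : Pt) : c2 x (r • y) = r * c2 x y := by simp [c2]; ring
lemma c2_sub_left (x y z : Pt) : c2 (x - y) z = c2 x z - c2 y z := by simp [c2]; ring
lemma c2_add_left (x y z : Pt) : c2 (x + y) z = c2 x z + c2 y z := by simp [c2]; ring

lemma c2_eq_zero_iff_parallel {u v : Pt} (hu : u ≠ 0) :
    c2 u v = 0 ↔ ∃ κ : ℝ, v = κ • u := by
  constructor
  · intro h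
    have h' : u 0 * v 1 - u 1 * v 0 = 0 := h
    have hne : u 0 ≠ 0 ∨ u 1 ≠ 0 := by
      by_contra hc; push_neg at hc
      exact hu (pt_ext (by simpa using hc.1) (by simpa using hc.2))
    rcases hne with h0 | h0
    · refine ⟨v 0 / u 0, pt_ext ?_ ?_⟩
      · simp; field_simp
      · simp; field_simp; linear_combination h'
    · refine ⟨v 1 / u 1, pt_ext ?_ ?_⟩
      · simp; field_simp; linear_combination -h'
      · simp; field_simp
  · rintro ⟨κ, rfl⟩; simp [c2]; ring

/-- Cramer: any point on both lines satisfies `q2v • Q = qv`. -/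
lemma cramer {A B A' B' Q : Pt} (hA : A ≠ A') (hB : B ≠ B')
    (h1 : Q ∈ lineThrough A A') (h2 : Q ∈ lineThrough B B') :
    q2v A B A' B' • Q = qv A B A' B' := by
  have e1 : (Q 0 - A 0) * (A' 1 - A 1) - (Q 1 - A 1) * (A' 0 - A 0) = 0 := by
    simpa [c2] using (mem_lineThrough_iff hA).1 h1
  have e2 : (Q 0 - B 0) * (B' 1 - B 1) - (Q 1 - B 1) * (B' 0 - B 0) = 0 := by
    simpa [c2] using (mem_lineThrough_iff hB).1 h2
  refine pt_ext ?_ ?_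
  · simp [q2v, qv, c2]
    linear_combination (A' 0 - A 0) * e2 - (B' 0 - B 0) * e1
  · simp [q2v, qv, c2]
    linear_combination (A' 1 - A 1) * e2 - (B' 1 - B 1) * e1

lemma key_qv_a (A B A' B' : Pt) :
    c2 (qv A B A' B' - q2v A B A' B' • A) (A' - A) = 0 := by
  simp [qv, q2v, c2]; ring

lemma key_qv_b (A B A' B' : Pt) :
    c2 (qv A B A' B' - q2v A B A' B' • B) (B' - B) = 0 := by
  simp [qv, q2v, c2]; ring

/-- If the determinant is nonzero, the Cramer point is on both lines. -/
lemma cramer_mem {A B A' B' : Pt} (hA : A ≠ A') (hB : B ≠ B')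
    (hq : q2v A B A' B' ≠ 0) :
    (q2v A B A' B')⁻¹ • qv A B A' B' ∈ lineThrough A A' ∩ lineThrough B B' := by
  have hrw : ∀ X : Pt, (q2v A B A' B')⁻¹ • qv A B A' B' - X
      = (q2v A B A' B')⁻¹ • (qv A B A' B' - q2v A B A' B' • X) := by
    intro X; rw [smul_sub, inv_smul_smul₀ hq]
  constructor
  · rw [mem_lineThrough_iff hA, hrw, c2_smul_left, key_qv_a, mul_zero]
  · rw [mem_lineThrough_iff hB, hrw, c2_smul_left, key_qv_b, mul_zero]

lemma inter_eq_cramer {A B A' B' : Pt} (hA : A ≠ A') (hB : B ≠ B')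
    (hq : q2v A B A' B' ≠ 0) {Q : Pt}
    (h1 : Q ∈ lineThrough A A') (h2 : Q ∈ lineThrough B B') :
    Q = (q2v A B A' B')⁻¹ • qv A B A' B' := by
  rw [← cramer hA hB h1 h2, inv_smul_smul₀ hq]

/-- Parallel distinct lines do not meet. -/
lemma parallel_inter_empty {A B A' B' : Pt} (hA : A ≠ A') (hB : B ≠ B')
    (hq : q2v A B A' B' = 0) (hAB : c2 (B - A) (A' - A) ≠ 0) :
    lineThrough A A' ∩ lineThrough B B' = ∅ := by
  rw [Set.eq_empty_iff_forall_notMem]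
  rintro Q ⟨h1, h2⟩
  have hu : A' - A ≠ 0 := sub_ne_zero.2 (Ne.symm hA)
  have hv : B' - B ≠ 0 := sub_ne_zero.2 (Ne.symm hB)
  obtain ⟨κ, hκ⟩ := (c2_eq_zero_iff_parallel hu).1 hq
  have hκ0 : κ ≠ 0 := by rintro rfl; simp at hκ; exact hv hκ
  have e1 : c2 (Q - A) (A' - A) = 0 := (mem_lineThrough_iff hA).1 h1
  have e2 : c2 (Q - B) (B' - B) = 0 := (mem_lineThrough_iff hB).1 h2
  rw [hκ, c2_smul_right] at e2
  have e2' : c2 (Q - B) (A' - A) = 0 := (mul_eq_zero.1 e2).resolve_left hκ0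
  apply hAB
  have : c2 (B - A) (A' - A) = c2 (Q - A) (A' - A) - c2 (Q - B) (A' - A) := by
    simp [c2]; ring
  rw [this, e1, e2', sub_zero]

end S10
namespace S10

lemma mul_pos_cancel {r a b : ℝ} (hr : r ≠ 0) (h : 0 < (r * a) * (r * b)) : 0 < a * b := by
  nlinarith [sq_nonneg r, mul_self_pos.2 hr]

lemma convex_pos' {x y s t : ℝ} (hx : 0 < x) (hy : 0 < y) (hs : 0 ≤ s) (ht : 0 ≤ t)
    (hst : s + t = 1) : 0 < s * x + t * y := by
  rcases hs.lt_or_eq with h | h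
  · have : 0 ≤ t * y := mul_nonneg ht hy.le
    nlinarith
  · have ht1 : t = 1 := by linarith
    simp [← h, ht1, hy]

lemma signs_combo {x y z w s1 t1 s2 t2 : ℝ} (hxy : 0 < x * y) (hxz : 0 < x * z)
    (hxw : 0 < x * w) (hs1 : 0 ≤ s1) (ht1 : 0 ≤ t1) (h1 : s1 + t1 = 1)
    (hs2 : 0 ≤ s2) (ht2 : 0 ≤ t2) (h2 : s2 + t2 = 1) :
    0 < (s1 * x + t1 * y) * (s2 * z + t2 * w) := by
  rcases mul_pos_iff.1 hxy with ⟨hx, hy⟩ | ⟨hx, hy⟩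
  · have hz : 0 < z := by nlinarith
    have hw : 0 < w := by nlinarith
    exact mul_pos (convex_pos' hx hy hs1 ht1 h1) (convex_pos' hz hw hs2 ht2 h2)
  · have hz : z < 0 := by nlinarith
    have hw : w < 0 := by nlinarith
    have p1 : 0 < s1 * (-x) + t1 * (-y) := convex_pos' (by linarith) (by linarith) hs1 ht1 h1
    have p2 : 0 < s2 * (-z) + t2 * (-w) := convex_pos' (by linarith) (by linarith) hs2 ht2 h2
    nlinarith

lemma sum_ne_zero_of_pos_mul {p q a b : ℝ} (h : 0 < p * q) (ha : 0 < a) (hb : 0 < b) :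
    a * p + b * q ≠ 0 := by
  rcases mul_pos_iff.1 h with ⟨hp, hq⟩ | ⟨hp, hq⟩
  · nlinarith
  · nlinarith

lemma c2_base_shift (z a b w : Pt) : c2 (z - b) w = c2 (z - a) w + c2 (a - b) w := by
  simp [c2]; ring

lemma c2_anti (x y : Pt) : c2 x y = -c2 y x := by simp [c2]; ring

lemma c2_indep {z u v : Pt} (hu : c2 z u = 0) (hv : c2 z v = 0) (huv : c2 u v ≠ 0) :
    z = 0 := by
  have h1 : z 0 * u 1 - z 1 * u 0 = 0 := hu
  have h2 : z 0 * v 1 - z 1 * v 0 = 0 := hv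
  have hz0 : z 0 * (u 0 * v 1 - u 1 * v 0) = 0 := by linear_combination u 0 * h2 - v 0 * h1
  have hz1 : z 1 * (u 0 * v 1 - u 1 * v 0) = 0 := by linear_combination u 1 * h2 - v 1 * h1
  have huv' : u 0 * v 1 - u 1 * v 0 ≠ 0 := huv
  exact pt_ext (by simpa using (mul_eq_zero.1 hz0).resolve_right huv')
    (by simpa using (mul_eq_zero.1 hz1).resolve_right huv')

lemma dot_normalOf (z X Y : Pt) :
    dot z (normalOf (Y - X)) = ‖Y - X‖⁻¹ * c2 z (X - Y) := by
  simp [dot, normalOf, c2, pt]; ring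

lemma pt_m1_ne_zero : pt (-1) 0 ≠ (0 : Pt) := by
  intro h
  have : pt (-1) 0 0 = (0 : Pt) 0 := by rw [h]
  simp [pt] at this

/-- convex combination evaluation of the affine functional `z ↦ c2 (z - a) w`. -/
lemma seg_c2 {X Y z : Pt} (hz : z ∈ segment ℝ X Y) (a w : Pt) :
    ∃ s t : ℝ, 0 ≤ s ∧ 0 ≤ t ∧ s + t = 1 ∧
      c2 (z - a) w = s * c2 (X - a) w + t * c2 (Y - a) w := by
  obtain ⟨s, t, hs, ht, hst, rfl⟩ := hz
  refine ⟨s, t, hs, ht, hst, ?_⟩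
  simp [c2]
  linear_combination (a 0 * w 1 - a 1 * w 0) * hst

/-- A point of a segment is on its line: `c2 (z - X) (Y - X) = 0`. -/
lemma seg_on_line {X Y z : Pt} (hz : z ∈ segment ℝ X Y) : c2 (z - X) (Y - X) = 0 := by
  obtain ⟨s, t, hs, ht, hst, rfl⟩ := hz
  simp [c2]
  linear_combination (X 0 * Y 1 - X 1 * Y 0) * hst

end S10
namespace S10

lemma pt_zero : pt 0 0 = (0 : Pt) := by ext i; fin_cases i <;> simp [pt]

lemma faisc_ab {N : ℕ} {G : Beam N} (hG : G ∈ Faisc N) {k : ℕ} (h1 : 1 ≤ k) (h2 : k ≤ N) :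
    cg G.1 k ≠ cg G.2 k := hG.1.1 k h1 h2

lemma faisc_ends {N : ℕ} {G : Beam N} (hG : G ∈ Faisc N) :
    cg G.1 (N+1) = cg G.2 (N+1) := hG.1.2.2.2.1

lemma faisc_mid {N : ℕ} {G : Beam N} (hG : G ∈ Faisc N) :
    midpoint ℝ (cg G.1 1) (cg G.2 1) = pt 0 0 := hG.1.2.2.2.2

/-- Reflexion condition in cross-product form, all based at `a_m`. -/
lemma refl_c2 {N : ℕ} {G : Beam N} (hG : G ∈ Faisc N) {m : ℕ} (h1 : 1 ≤ m) (h2 : m ≤ N) :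
    0 < c2 (cg G.1 (m-1) - cg G.1 m) (cg G.1 m - cg G.2 m) *
        c2 (cg G.2 (m-1) - cg G.1 m) (cg G.1 m - cg G.2 m) ∧
    0 < c2 (cg G.1 (m-1) - cg G.1 m) (cg G.1 m - cg G.2 m) *
        c2 (cg G.1 (m+1) - cg G.1 m) (cg G.1 m - cg G.2 m) ∧
    0 < c2 (cg G.1 (m-1) - cg G.1 m) (cg G.1 m - cg G.2 m) *
        c2 (cg G.2 (m+1) - cg G.1 m) (cg G.1 m - cg G.2 m) := by
  have hab : cg G.1 m ≠ cg G.2 m := faisc_ab hG h1 h2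
  have hr : (0:ℝ) < ‖cg G.2 m - cg G.1 m‖⁻¹ := by
    rw [inv_pos, norm_pos_iff, sub_ne_zero]; exact Ne.symm hab
  obtain ⟨hxy, hxz, hxw⟩ := hG.2.2 m h1 h2
  simp only [dot_normalOf] at hxy hxz hxw
  rw [c2_base_shift (cg G.2 (m-1)) (cg G.1 m) (cg G.2 m), c2_self, add_zero] at hxy
  rw [c2_base_shift (cg G.2 (m+1)) (cg G.1 m) (cg G.2 m), c2_self, add_zero] at hxw
  exact ⟨mul_pos_cancel hr.ne' hxy, mul_pos_cancel hr.ne' hxz, mul_pos_cancel hr.ne' hxw⟩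

lemma c2_zero_left (w : Pt) : c2 0 w = 0 := by simp [c2]

/-- Data for one reflection step at mirror `m`. -/
lemma step_ne {N : ℕ} {G : Beam N} (hG : G ∈ Faisc N) {m : ℕ} (h1 : 1 ≤ m) (h2 : m ≤ N) :
    cg G.1 m ≠ cg G.1 (m+1) ∧ cg G.2 m ≠ cg G.2 (m+1) ∧
    c2 (cg G.2 m - cg G.1 m) (cg G.1 (m+1) - cg G.1 m) ≠ 0 ∧
    c2 (cg G.2 (m+1) - cg G.2 m) (cg G.1 m - cg G.2 m) ≠ 0 := by
  obtain ⟨hxy, hxz, hxw⟩ := refl_c2 hG h1 h2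
  have hz : c2 (cg G.1 (m+1) - cg G.1 m) (cg G.1 m - cg G.2 m) ≠ 0 :=
    right_ne_zero_of_mul hxz.ne'
  have hw : c2 (cg G.2 (m+1) - cg G.1 m) (cg G.1 m - cg G.2 m) ≠ 0 :=
    right_ne_zero_of_mul hxw.ne'
  refine ⟨?_, ?_, ?_, ?_⟩
  · intro hc; apply hz; rw [← hc, sub_self, c2_zero_left]
  · intro hc; apply hw
    rw [← hc]
    have : c2 (cg G.2 m - cg G.1 m) (cg G.1 m - cg G.2 m) = 0 := by simp [c2]; ring
    exact this
  · intro hc; apply hz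
    have : c2 (cg G.1 (m+1) - cg G.1 m) (cg G.1 m - cg G.2 m)
        = c2 (cg G.2 m - cg G.1 m) (cg G.1 (m+1) - cg G.1 m) := by simp [c2]; ring
    rw [this, hc]
  · intro hc; apply hw
    have : c2 (cg G.2 (m+1) - cg G.1 m) (cg G.1 m - cg G.2 m)
        = c2 (cg G.2 (m+1) - cg G.2 m) (cg G.1 m - cg G.2 m)
          + c2 (cg G.2 m - cg G.1 m) (cg G.1 m - cg G.2 m) := by simp [c2]; ring
    rw [this, hc]
    simp [c2]; ring

lemma cg_tChain_pos {N : ℕ} (G : Beam N) (t : ℝ) {i : ℕ} (h1 : 1 ≤ i) (h2 : i ≤ N+1) :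
    cg (tChain G t) i = impact G t (i-1) := by
  have hlt : i < N + 2 := by omega
  rw [cg, dif_pos hlt]
  show tChain G t ⟨i, hlt⟩ = _
  rw [tChain]
  simp only [Fin.val_mk]
  rw [if_neg (by omega)]

lemma cg_tChain_zero {N : ℕ} (G : Beam N) (t : ℝ) :
    cg (tChain G t) 0 = impact G t 0 + pt (-1) 0 := by
  have hlt : 0 < N + 2 := by omega
  rw [cg, dif_pos hlt]
  show tChain G t ⟨0, hlt⟩ = _
  rw [tChain]
  simp

lemma impact_zero_eq {N : ℕ} (G : Beam N) (t : ℝ) :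
    impact G t 0 = (1-t) • cg G.1 1 + t • cg G.2 1 := rfl

lemma impact0_half {N : ℕ} {G : Beam N} (hG : G ∈ Faisc N) :
    impact G (1/2 : ℝ) 0 = 0 := by
  rw [impact_zero_eq]
  have h := faisc_mid hG
  rw [pt_zero] at h
  rw [← h, midpoint_eq_smul_add, smul_add]
  norm_num

lemma zero_mem_mirror1 {N : ℕ} {G : Beam N} (hG : G ∈ Faisc N) :
    (0 : Pt) ∈ mirror G 1 := by
  rw [mirror, ← pt_zero, ← faisc_mid hG]
  exact midpoint_mem_segment _ _

/-- the impact points with index `1 ≤ m ≤ N-1` are never the origin. -/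
lemma impact_ne_zero {N : ℕ} {G : Beam N} (hG : G ∈ Faisc N) {m : ℕ}
    (h1 : 1 ≤ m) (h2 : m + 1 ≤ N) : impact G (1/2 : ℝ) m ≠ 0 := by
  intro h0
  have hNO := hG.2.1 (m+1) (by omega) (1/2 : ℝ) (by norm_num) 1 le_rfl (by omega)
    (by omega) (by omega)
  apply Set.eq_empty_iff_forall_notMem.1 hNO 0
  refine ⟨?_, zero_mem_mirror1 hG⟩
  rw [ray, if_neg (by omega), cg_tChain_pos G _ (by omega) (by omega)]
  show (0:Pt) ∈ segment ℝ (impact G (1/2:ℝ) (m+1-1)) _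
  rw [show m+1-1 = m from rfl, h0]
  exact left_mem_segment ℝ 0 _

/-- The last impact point is the common endpoint. -/
lemma impact_last {N : ℕ} {G : Beam N} (hG : G ∈ Faisc N) (hN : 1 ≤ N) (t : ℝ) :
    impact G t N = cg G.1 (N+1) := by
  obtain ⟨n, rfl⟩ : ∃ n, N = n + 1 := ⟨N - 1, by omega⟩
  obtain ⟨hA, hB, hAB, -⟩ := step_ne hG (by omega : 1 ≤ n+1) (le_refl (n+1))
  have hEnds : cg G.1 (n+2) = cg G.2 (n+2) := faisc_ends hG
  have hmemE : cg G.1 (n+2) ∈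
      lineThrough (cg G.1 (n+1)) (cg G.1 (n+2)) ∩ lineThrough (cg G.2 (n+1)) (cg G.2 (n+2)) := by
    refine ⟨⟨1, by simp⟩, ?_⟩
    rw [← hEnds]; exact ⟨1, by simp⟩
  have hq2 : q2v (cg G.1 (n+1)) (cg G.2 (n+1)) (cg G.1 (n+2)) (cg G.2 (n+2)) ≠ 0 := by
    intro hq
    have hemp := parallel_inter_empty hA hB hq hAB
    exact Set.eq_empty_iff_forall_notMem.1 hemp _ hmemE
  have hpick : pickPt (lineThrough (cg G.1 (n+1)) (cg G.1 (n+2)) ∩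
      lineThrough (cg G.2 (n+1)) (cg G.2 (n+2))) = cg G.1 (n+2) := by
    refine pickPt_eq hmemE ?_
    intro y hy
    rw [inter_eq_cramer hA hB hq2 hy.1 hy.2,
      ← inter_eq_cramer hA hB hq2 hmemE.1 hmemE.2]
  show impact G t (n+1) = cg G.1 (n+2)
  rw [impact]
  have hred : n + 2 - 1 = n + 1 := rfl
  simp only [hred]
  rw [if_pos ⟨cg G.1 (n+2), hmemE⟩, hpick]
  refine pickPt_eq ⟨⟨1, by simp⟩, left_mem_segment ℝ _ _⟩ ?_
  rintro y ⟨-, hy⟩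
  rw [← hEnds, segment_same] at hy
  exact hy

end S10
namespace S10

lemma convex_ne {fa fb : ℝ} (h : 0 < fa * fb) {s t : ℝ} (hs : 0 ≤ s) (ht : 0 ≤ t)
    (hst : s + t = 1) : s * fa + t * fb ≠ 0 := by
  rcases mul_pos_iff.1 h with ⟨h1, h2⟩ | ⟨h1, h2⟩
  · exact (convex_pos' h1 h2 hs ht hst).ne'
  · have : 0 < s * (-fa) + t * (-fb) := convex_pos' (by linarith) (by linarith) hs ht hst
    intro hc; nlinarith

lemma stepPt_sub (A B A' B' P : Pt) :
    stepPt A B A' B' P - P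
      = (c2 (A' - P) (B' - A') / c2 (Dv A B A' B' P) (B' - A')) • Dv A B A' B' P := by
  rw [stepPt]; abel

lemma stepPt_on_mirror {A B A' B' P : Pt}
    (hden : c2 (Dv A B A' B' P) (B' - A') ≠ 0) :
    c2 (stepPt A B A' B' P - A') (B' - A') = 0 := by
  have h1 : stepPt A B A' B' P - A'
      = (P - A') + (c2 (A' - P) (B' - A') / c2 (Dv A B A' B' P) (B' - A')) • Dv A B A' B' P := by
    rw [stepPt]; abel
  rw [h1, c2_add_left, c2_smul_left, div_mul_cancel₀ _ hden]
  have : c2 (A' - P) (B' - A') = -c2 (P - A') (B' - A') := by simp [c2]; ring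
  rw [this]; ring

/-- Main step lemma at `t = 1/2`. -/
lemma impact_step {N : ℕ} {G : Beam N} (hG : G ∈ Faisc N) {m : ℕ} (hm : m + 2 ≤ N)
    (hseg : impact G (1/2:ℝ) m ∈ segment ℝ (cg G.1 (m+1)) (cg G.2 (m+1)))
    (heq : impact G (1/2:ℝ) m = impact' G m) :
    impact G (1/2:ℝ) (m+1) ∈ segment ℝ (cg G.1 (m+2)) (cg G.2 (m+2)) ∧
    impact G (1/2:ℝ) (m+1) = impact' G (m+1) ∧
    c2 (Dv (cg G.1 (m+1)) (cg G.2 (m+1)) (cg G.1 (m+2)) (cg G.2 (m+2)) (impact' G m))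
      (cg G.2 (m+2) - cg G.1 (m+2)) ≠ 0 := by
  set A := cg G.1 (m+1) with hAdef
  set B := cg G.2 (m+1) with hBdef
  set A' := cg G.1 (m+2) with hA'def
  set B' := cg G.2 (m+2) with hB'def
  set P := impact G (1/2:ℝ) m with hPdef
  obtain ⟨hA, hB, hAB, hBB⟩ := step_ne hG (by omega : 1 ≤ m+1) (by omega : m+1 ≤ N)
  have hab1 : A ≠ B := faisc_ab hG (by omega) (by omega)
  have hab2 : A' ≠ B' := faisc_ab hG (by omega) (by omega)
  -- P is strictly off the line of the next mirror
  have hPside : c2 (P - A') (B' - A') ≠ 0 := by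
    have h2 := (refl_c2 hG (by omega : 1 ≤ m+2) hm).1
    have hconv : c2 (A - A') (A' - B') * c2 (B - A') (A' - B') =
        c2 (cg G.1 (m+2-1) - cg G.1 (m+2)) (cg G.1 (m+2) - cg G.2 (m+2)) *
        c2 (cg G.2 (m+2-1) - cg G.1 (m+2)) (cg G.1 (m+2) - cg G.2 (m+2)) := by
      norm_num; rfl
    rw [← hconv] at h2
    obtain ⟨s, t, hs, ht, hst, hPc⟩ := seg_c2 hseg A' (A' - B')
    have hne : c2 (P - A') (A' - B') ≠ 0 := by
      rw [hPc]; exact convex_ne h2 hs ht hst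
    intro hc; apply hne
    have : c2 (P - A') (A' - B') = -c2 (P - A') (B' - A') := by simp [c2]; ring
    rw [this, hc, neg_zero]
  have hred : m + 2 - 1 = m + 1 := rfl
  by_cases hbr : (lineThrough A A' ∩ lineThrough B B').Nonempty
  · -- lines meet
    have hq2 : q2v A B A' B' ≠ 0 := by
      intro hq
      rw [parallel_inter_empty hA hB hq hAB] at hbr
      exact Set.not_nonempty_empty hbr
    set Q := (q2v A B A' B')⁻¹ • qv A B A' B' with hQdef
    have hQmem := cramer_mem hA hB hq2
    have hpickQ : pickPt (lineThrough A A' ∩ lineThrough B B') = Q :=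
      pickPt_eq hQmem (fun y hy => inter_eq_cramer hA hB hq2 hy.1 hy.2)
    have himp : impact G (1/2:ℝ) (m+1) = pickPt (lineThrough P Q ∩ segment ℝ A' B') := by
      rw [impact]
      simp only [hred]
      rw [if_pos hbr, hpickQ]
    have hDv : Dv A B A' B' P = q2v A B A' B' • (Q - P) := by
      rw [Dv, smul_sub, hQdef, smul_inv_smul₀ hq2]
    have hden0 : c2 (Q - P) (B' - A') ≠ 0 := by
      intro hc
      have hS : lineThrough P Q ∩ segment ℝ A' B' = ∅ := by
        rw [Set.eq_empty_iff_forall_notMem]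
        rintro y ⟨⟨u', hy1⟩, hy2⟩
        apply hPside
        have hyA : c2 (y - A') (B' - A') = 0 := by
          have := seg_on_line hy2
          have hconv : c2 (y - A') (B' - A') = c2 (y - A') (B' - A') := rfl
          exact this
        have hyP : c2 (y - P) (B' - A') = 0 := by
          rw [hy1, add_sub_cancel_left, c2_smul_left, hc, mul_zero]
        have : c2 (P - A') (B' - A') = c2 (y - A') (B' - A') - c2 (y - P) (B' - A') := by
          simp [c2]; ring
        rw [this, hyA, hyP, sub_zero]
      rw [hS] at himp
      have : impact G (1/2:ℝ) (m+1) = 0 := by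
        rw [himp, pickPt, dif_neg Set.not_nonempty_empty]
      exact impact_ne_zero hG (by omega) (by omega) this
    have hdenDv : c2 (Dv A B A' B' P) (B' - A') = q2v A B A' B' * c2 (Q - P) (B' - A') := by
      rw [hDv, c2_smul_left]
    have hden : c2 (Dv A B A' B' P) (B' - A') ≠ 0 := by
      rw [hdenDv]; exact mul_ne_zero hq2 hden0
    set Y := stepPt A B A' B' P with hYdef
    have hYline : ∃ u : ℝ, Y = P + u • (Q - P) := by
      refine ⟨(c2 (A' - P) (B' - A') / c2 (Dv A B A' B' P) (B' - A')) * q2v A B A' B', ?_⟩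
      rw [hYdef, stepPt, hDv, smul_smul]
    have hYmirror : c2 (Y - A') (B' - A') = 0 := stepPt_on_mirror hden
    have hSsubY : ∀ y ∈ lineThrough P Q ∩ segment ℝ A' B', y = Y := by
      rintro y ⟨⟨u', hy1⟩, hy2⟩
      obtain ⟨uY, huY⟩ := hYline
      have hyA : c2 (y - A') (B' - A') = 0 := seg_on_line hy2
      have hyY : y - Y = (u' - uY) • (Q - P) := by
        rw [hy1, huY, sub_smul]; abel
      have hzero : c2 (y - Y) (B' - A') = 0 := by
        have : c2 (y - Y) (B' - A') = c2 (y - A') (B' - A') - c2 (Y - A') (B' - A') := by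
          simp [c2]; ring
        rw [this, hyA, hYmirror, sub_zero]
      rw [hyY, c2_smul_left] at hzero
      have : u' - uY = 0 := by
        rcases mul_eq_zero.1 hzero with h | h
        · exact h
        · exact absurd h hden0
      rw [hy1, huY, show u' = uY from by linarith]
    have hSne : (lineThrough P Q ∩ segment ℝ A' B').Nonempty := by
      by_contra hS
      have : impact G (1/2:ℝ) (m+1) = 0 := by
        rw [himp, pickPt, dif_neg hS]
      exact impact_ne_zero hG (by omega) (by omega) this
    obtain ⟨y0, hy0⟩ := hSne
    have hy0Y : y0 = Y := hSsubY y0 hy0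
    have himpY : impact G (1/2:ℝ) (m+1) = Y := by
      rw [himp]; exact pickPt_eq (hy0Y ▸ hy0) hSsubY
    refine ⟨?_, ?_, ?_⟩
    · rw [himpY, ← hy0Y]; exact hy0.2
    · rw [himpY, hYdef, impact']
      rw [← heq]
    · rw [← heq]; exact hden
  · -- parallel case
    have hq2 : q2v A B A' B' = 0 := by
      by_contra hq
      exact hbr ⟨_, cramer_mem hA hB hq⟩
    have hu : A' - A ≠ 0 := sub_ne_zero.2 (Ne.symm hA)
    have hv : B' - B ≠ 0 := sub_ne_zero.2 (Ne.symm hB)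
    obtain ⟨κ, hκ⟩ := (c2_eq_zero_iff_parallel hu).1 hq2
    have hκ0 : κ ≠ 0 := by rintro rfl; simp at hκ; exact hv hκ
    obtain ⟨s, t, hs, ht, hst, hP⟩ := hseg
    have hst' : s = 1 - t := by linarith
    have hlam : pickR {l : ℝ | P = (1 - l) • A + l • B} = t := by
      refine pickR_eq ?_ ?_
      · show P = (1 - t) • A + t • B
        rw [← hP, hst']
      · intro y hy
        have hy' : (1 - y) • A + y • B = (1 - t) • A + t • B := by
          rw [← hy]; show P = _; rw [← hP, hst']
        have e0 : (1-y) * A 0 + y * B 0 = (1-t) * A 0 + t * B 0 := by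
          have := congrArg (fun z : Pt => z 0) hy'; simpa using this
        have e1 : (1-y) * A 1 + y * B 1 = (1-t) * A 1 + t * B 1 := by
          have := congrArg (fun z : Pt => z 1) hy'; simpa using this
        have key : (y - t) • (B - A) = 0 := by
          apply pt_ext
          · simp [-mul_eq_zero]; linear_combination e0
          · simp [-mul_eq_zero]; linear_combination e1
        rcases smul_eq_zero.1 key with h | h
        · linarith [h]
        · exact absurd (sub_eq_zero.1 h) (Ne.symm hab1)
    have himp : impact G (1/2:ℝ) (m+1) = (1 - t) • A' + t • B' := by
      rw [impact]
      simp only [hred]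
      rw [if_neg hbr, hlam]
    have hκ' : c2 B B' - c2 A A' * κ ≠ 0 := by
      intro h0
      apply hAB
      have h1 : c2 B (B' - B) = c2 B B' := by simp [c2]; ring
      have h2 : c2 A (A' - A) = c2 A A' := by simp [c2]; ring
      have h4 : κ * c2 B (A' - A) = c2 B B' := by
        rw [← c2_smul_right, ← hκ, h1]
      have h3 : c2 B (A' - A) = c2 A (A' - A) :=
        mul_left_cancel₀ hκ0 (by rw [h4, h2]; linarith)
      show c2 (B - A) (A' - A) = 0
      simp [c2_sub_left, h3]
    have hqvpar : Dv A B A' B' P = (c2 B B' - c2 A A' * κ) • (A' - A) := by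
      rw [Dv, hq2, zero_smul, sub_zero, qv, hκ, smul_smul, ← sub_smul]
    have hcuw : c2 (A' - A) (B' - A') ≠ 0 := by
      have hkey : c2 (A' - A) (B' - A') = c2 (A' - A) (B' - B) - c2 (B - A) (A' - A) := by
        simp [c2]; ring
      rw [hkey, hκ, c2_smul_right, c2_self, mul_zero, zero_sub]
      exact neg_ne_zero.2 hAB
    have hden : c2 (Dv A B A' B' P) (B' - A') ≠ 0 := by
      rw [hqvpar, c2_smul_left]
      exact mul_ne_zero hκ' hcuw
    have hB'eq : B' = B + κ • (A' - A) := by rw [← hκ]; abel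
    set Y := stepPt A B A' B' P with hYdef
    have hYmirror : c2 (Y - A') (B' - A') = 0 := stepPt_on_mirror hden
    have hYpar : c2 (Y - P) (A' - A) = 0 := by
      have h1 : Y - P = (c2 (A' - P) (B' - A') / c2 (Dv A B A' B' P) (B' - A'))
          • ((c2 B B' - c2 A A' * κ) • (A' - A)) := by
        rw [hYdef, stepPt_sub, hqvpar]
      rw [h1, smul_smul, c2_smul_left, c2_self, mul_zero]
    set Z := (1 - t) • A' + t • B' with hZdef
    have hZmirror : c2 (Z - A') (B' - A') = 0 := by
      have h1 : Z - A' = t • (B' - A') := by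
        rw [hZdef, sub_smul, one_smul, smul_sub]; abel
      rw [h1, c2_smul_left, c2_self, mul_zero]
    have hZpar : c2 (Z - P) (A' - A) = 0 := by
      have h1 : Z - P = ((1 - t) + t * κ) • (A' - A) := by
        rw [hZdef, hB'eq, ← hP, hst']
        module
      rw [h1, c2_smul_left, c2_self, mul_zero]
    have hZY : Z = Y := by
      have hz1 : c2 (Z - Y) (A' - A) = 0 := by
        have : Z - Y = (Z - P) - (Y - P) := by abel
        rw [this, c2_sub_left, hZpar, hYpar, sub_zero]
      have hz2 : c2 (Z - Y) (B' - A') = 0 := by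
        have : Z - Y = (Z - A') - (Y - A') := by abel
        rw [this, c2_sub_left, hZmirror, hYmirror, sub_zero]
      have := c2_indep hz1 hz2 hcuw
      exact sub_eq_zero.1 this
    refine ⟨?_, ?_, ?_⟩
    · rw [himp]
      exact ⟨1 - t, t, by linarith, ht, by ring, rfl⟩
    · rw [himp, hZY, hYdef, impact', ← heq]
    · rw [← heq]; exact hden

end S10
namespace S10

lemma impact_inv {N : ℕ} {G : Beam N} (hG : G ∈ Faisc N) :
    ∀ m, m + 1 ≤ N →
      impact G (1/2:ℝ) m ∈ segment ℝ (cg G.1 (m+1)) (cg G.2 (m+1)) ∧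
      impact G (1/2:ℝ) m = impact' G m := by
  intro m
  induction m with
  | zero =>
    intro _
    constructor
    · rw [impact_zero_eq]
      exact ⟨1/2, 1/2, by norm_num, by norm_num, by norm_num, by norm_num⟩
    · rw [impact_zero_eq, impact', midpoint_eq_smul_add, smul_add]
      norm_num
  | succ m ih =>
    intro h
    have hm : m + 2 ≤ N := by omega
    obtain ⟨h1, h2⟩ := ih (by omega)
    exact ⟨(impact_step hG hm h1 h2).1, (impact_step hG hm h1 h2).2.1⟩

lemma impact_den {N : ℕ} {G : Beam N} (hG : G ∈ Faisc N) {m : ℕ} (hm : m + 2 ≤ N) :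
    c2 (Dv (cg G.1 (m+1)) (cg G.2 (m+1)) (cg G.1 (m+2)) (cg G.2 (m+2)) (impact' G m))
      (cg G.2 (m+2) - cg G.1 (m+2)) ≠ 0 := by
  obtain ⟨h1, h2⟩ := impact_inv hG m (by omega)
  exact (impact_step hG hm h1 h2).2.2

lemma MF_eq {N : ℕ} (G : Beam N) : MF G = tChain G (1/2 : ℝ) := rfl

lemma MF_cg_zero {N : ℕ} {G : Beam N} (hG : G ∈ Faisc N) :
    cg (MF G) 0 = pt (-1) 0 := by
  rw [MF_eq, cg_tChain_zero, impact0_half hG, zero_add]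

lemma MF_cg_zero' {N : ℕ} {G : Beam N} (hG : G ∈ Faisc N) :
    cg (MF G) 0 = cg G.1 0 := by
  rw [MF_cg_zero hG, hG.1.2.1]

lemma MF_mem_mirror {N : ℕ} {G : Beam N} (hG : G ∈ Faisc N) (hN : 1 ≤ N) {k : ℕ}
    (h1 : 1 ≤ k) (h2 : k ≤ N+1) :
    cg (MF G) k ∈ segment ℝ (cg G.1 k) (cg G.2 k) := by
  rw [MF_eq, cg_tChain_pos G _ h1 h2]
  obtain ⟨j, rfl⟩ : ∃ j, k = j + 1 := ⟨k - 1, by omega⟩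
  rw [show j + 1 - 1 = j from rfl]
  rcases Nat.lt_or_ge j N with hj | hj
  · exact (impact_inv hG j (by omega)).1
  · have hjN : j = N := by omega
    subst hjN
    rw [impact_last hG hN]
    exact left_mem_segment ℝ _ _

lemma comb_c2 {x y z : Pt} {α β : ℝ} (hαβ : α + β = 1) (h : α • x + β • y = z) (a w : Pt) :
    c2 (z - a) w = α * c2 (x - a) w + β * c2 (y - a) w := by
  subst h; simp [c2]
  linear_combination (a 0 * w 1 - a 1 * w 0) * hαβ

/-- The chain points adjacent to mirror `m` are strictly on the same side. -/
lemma side_prod {N : ℕ} {G : Beam N} (hG : G ∈ Faisc N) (hN : 1 ≤ N) {m : ℕ}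
    (h1 : 1 ≤ m) (h2 : m ≤ N) :
    0 < c2 (cg (MF G) (m-1) - cg G.1 m) (cg G.1 m - cg G.2 m) *
        c2 (cg (MF G) (m+1) - cg G.1 m) (cg G.1 m - cg G.2 m) := by
  obtain ⟨hxy, hxz, hxw⟩ := refl_c2 hG h1 h2
  have hcm1 : ∃ s t : ℝ, 0 ≤ s ∧ 0 ≤ t ∧ s + t = 1 ∧
      c2 (cg (MF G) (m-1) - cg G.1 m) (cg G.1 m - cg G.2 m)
        = s * c2 (cg G.1 (m-1) - cg G.1 m) (cg G.1 m - cg G.2 m)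
          + t * c2 (cg G.2 (m-1) - cg G.1 m) (cg G.1 m - cg G.2 m) := by
    rcases Nat.lt_or_ge m 2 with hm | hm
    · have hm1 : m = 1 := by omega
      subst hm1
      refine ⟨1, 0, by norm_num, by norm_num, by norm_num, ?_⟩
      rw [MF_cg_zero' hG]; ring
    · obtain ⟨s, t, hs, ht, hst, hc⟩ :=
        seg_c2 (MF_mem_mirror hG hN (by omega : 1 ≤ m-1) (by omega : m-1 ≤ N+1))
          (cg G.1 m) (cg G.1 m - cg G.2 m)
      exact ⟨s, t, hs, ht, hst, hc⟩
  obtain ⟨s1, t1, hs1, ht1, h1st, hc1⟩ := hcm1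
  obtain ⟨s2, t2, hs2, ht2, h2st, hc2⟩ :=
    seg_c2 (MF_mem_mirror hG hN (by omega : 1 ≤ m+1) (by omega : m+1 ≤ N+1))
      (cg G.1 m) (cg G.1 m - cg G.2 m)
  rw [hc1, hc2]
  exact signs_combo hxy hxz hxw hs1 ht1 h1st hs2 ht2 h2st

lemma MF_on_mirror_line {N : ℕ} {G : Beam N} (hG : G ∈ Faisc N) (hN : 1 ≤ N) {m : ℕ}
    (h1 : 1 ≤ m) (h2 : m ≤ N) :
    c2 (cg (MF G) m - cg G.1 m) (cg G.1 m - cg G.2 m) = 0 := by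
  have := seg_on_line (MF_mem_mirror hG hN h1 (by omega))
  have hconv : c2 (cg (MF G) m - cg G.1 m) (cg G.1 m - cg G.2 m)
      = -c2 (cg (MF G) m - cg G.1 m) (cg G.2 m - cg G.1 m) := by simp [c2]; ring
  rw [hconv, this, neg_zero]

lemma MF_mem_LO {N : ℕ} {G : Beam N} (hG : G ∈ Faisc N) (hN : 1 ≤ N) : MF G ∈ LO N := by
  constructor
  · rintro (h01 | ⟨j, k, hj, hk1, hk2, hkj, hkj1, hmem⟩)
    · rw [MF_eq, cg_tChain_zero, cg_tChain_pos G _ le_rfl (by omega),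
        show (1:ℕ) - 1 = 0 from rfl] at h01
      exact pt_m1_ne_zero (by
        have := add_left_cancel (a := impact G (1/2:ℝ) 0)
          (b := pt (-1) 0) (c := 0) ?_
        · exact this
        · rw [add_zero, h01])
    · have hray := hG.2.1 j hj (1/2 : ℝ) (by norm_num) k hk1 hk2 hkj hkj1
      apply Set.eq_empty_iff_forall_notMem.1 hray (cg (MF G) k)
      exact ⟨hmem, MF_mem_mirror hG hN hk1 hk2⟩
  · rintro ⟨i, hi1, hiN, hmem⟩
    obtain ⟨α, β, hα, hβ, hαβ, hsum⟩ := hmem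
    have h0 := MF_on_mirror_line hG hN hi1 hiN
    rw [comb_c2 hαβ hsum (cg G.1 i) (cg G.1 i - cg G.2 i)] at h0
    exact sum_ne_zero_of_pos_mul (side_prod hG hN hi1 hiN) hα hβ h0

end S10
namespace S10

lemma pt_to_complex_ne {v : Pt} (hv : v ≠ 0) : (⟨v 0, v 1⟩ : ℂ) ≠ 0 := by
  intro h
  rw [Complex.ext_iff] at h
  simp only [Complex.zero_re, Complex.zero_im] at h
  exact hv (pt_ext (by simpa using h.1) (by simpa using h.2))

lemma angle_sub_sin {v w : Pt} (hv : v ≠ 0) (hw : w ≠ 0) :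
    Real.Angle.sin (angleOf w - angleOf v)
      = c2 v w / (‖(⟨v 0, v 1⟩ : ℂ)‖ * ‖(⟨w 0, w 1⟩ : ℂ)‖) := by
  have hv' : (⟨v 0, v 1⟩ : ℂ) ≠ 0 := pt_to_complex_ne hv
  have hw' : (⟨w 0, w 1⟩ : ℂ) ≠ 0 := pt_to_complex_ne hw
  have hva : (0:ℝ) < ‖(⟨v 0, v 1⟩ : ℂ)‖ := by
    rw [norm_pos_iff]; exact hv'
  have hwa : (0:ℝ) < ‖(⟨w 0, w 1⟩ : ℂ)‖ := by
    rw [norm_pos_iff]; exact hw'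
  rw [angleOf, angleOf, ← Real.Angle.coe_sub, Real.Angle.sin_coe, Real.sin_sub,
    Complex.sin_arg, Complex.sin_arg, Complex.cos_arg hv', Complex.cos_arg hw']
  show (w 1) / _ * ((v 0) / _) - (w 0) / _ * ((v 1) / _) = _
  rw [c2]
  field_simp

lemma pos_div_iff {a D : ℝ} (hD : 0 < D) : 0 < a / D ↔ 0 < a := by
  rw [lt_div_iff₀ hD, zero_mul]

lemma mem_arc_iff {v w : Pt} (hv : v ≠ 0) (hw : w ≠ 0) {ε : ℤ} (hε : ε = 1 ∨ ε = -1) :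
    angleOf w ∈ arc (angleOf v) ε ↔ 0 < (ε : ℝ) * c2 v w := by
  have hva : (0:ℝ) < ‖(⟨v 0, v 1⟩ : ℂ)‖ := by
    rw [norm_pos_iff]; exact pt_to_complex_ne hv
  have hwa : (0:ℝ) < ‖(⟨w 0, w 1⟩ : ℂ)‖ := by
    rw [norm_pos_iff]; exact pt_to_complex_ne hw
  have hD : (0:ℝ) < ‖(⟨v 0, v 1⟩ : ℂ)‖ * ‖(⟨w 0, w 1⟩ : ℂ)‖ := mul_pos hva hwa
  constructor
  · rintro ⟨s, hs0, hsπ, hβ⟩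
    have hδ : angleOf w - angleOf v = (((ε:ℝ) * s : ℝ) : Real.Angle) := by
      rw [hβ]; abel
    have hsin : Real.Angle.sin (angleOf w - angleOf v) = Real.sin ((ε:ℝ) * s) := by
      rw [hδ, Real.Angle.sin_coe]
    rw [angle_sub_sin hv hw] at hsin
    have hssin : 0 < Real.sin s := Real.sin_pos_of_pos_of_lt_pi hs0 hsπ
    rcases hε with rfl | rfl
    · have : Real.sin ((1:ℝ) * s) = Real.sin s := by norm_num
      push_cast at hsin ⊢
      rw [one_mul] at hsin ⊢
      rw [← hsin] at hssin
      exact (pos_div_iff hD).1 hssin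
    · push_cast at hsin ⊢
      rw [neg_one_mul, Real.sin_neg] at hsin
      have hlt : c2 v w / (‖(⟨v 0, v 1⟩ : ℂ)‖ * ‖(⟨w 0, w 1⟩ : ℂ)‖) < 0 := by
        rw [hsin]; linarith
      rw [neg_one_mul]
      have hc2neg : c2 v w < 0 := by
        by_contra hc
        push_neg at hc
        exact absurd (div_nonneg hc hD.le) (not_le.2 hlt)
      linarith
  · intro hpos
    set δ := angleOf w - angleOf v with hδdef
    have hsin : Real.sin δ.toReal = c2 v w / (‖(⟨v 0, v 1⟩ : ℂ)‖ * ‖(⟨w 0, w 1⟩ : ℂ)‖) := by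
      rw [← Real.Angle.sin_coe, δ.coe_toReal, angle_sub_sin hv hw]
    have hlow : -π < δ.toReal := δ.neg_pi_lt_toReal
    have hhigh : δ.toReal ≤ π := δ.toReal_le_pi
    have hgoal : ∀ s : ℝ, 0 < s → s < π → ((ε:ℝ) * s : ℝ) = δ.toReal →
        angleOf w ∈ arc (angleOf v) ε := by
      intro s h1 h2 h3
      refine ⟨s, h1, h2, ?_⟩
      rw [h3, δ.coe_toReal, hδdef]
      abel
    rcases hε with rfl | rfl
    · push_cast at hpos
      rw [one_mul] at hpos
      have hsinpos : 0 < Real.sin δ.toReal := by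
        rw [hsin]; exact (pos_div_iff hD).2 hpos
      have hr0 : 0 < δ.toReal := by
        by_contra hc
        push_neg at hc
        have h1 : 0 ≤ Real.sin (-δ.toReal) :=
          Real.sin_nonneg_of_nonneg_of_le_pi (by linarith) (by linarith)
        rw [Real.sin_neg] at h1
        linarith
      have hrπ : δ.toReal < π := by
        rcases lt_or_eq_of_le hhigh with h | h
        · exact h
        · rw [h] at hsinpos; simp [Real.sin_pi] at hsinpos
      exact hgoal δ.toReal hr0 hrπ (by push_cast; ring)
    · push_cast at hpos
      rw [neg_one_mul] at hpos
      have hsinneg : Real.sin δ.toReal < 0 := by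
        have hc2 : c2 v w < 0 := by linarith
        rw [hsin]
        have := (pos_div_iff hD).2 (by linarith : 0 < -c2 v w)
        rw [neg_div] at this
        linarith
      have hr0 : δ.toReal < 0 := by
        by_contra hc
        push_neg at hc
        have := Real.sin_nonneg_of_nonneg_of_le_pi hc hhigh
        linarith
      exact hgoal (-δ.toReal) (by linarith) (by linarith) (by push_cast; ring)

end S10
namespace S10

lemma c2_rebase (x y a w : Pt) : c2 (x - y) w = c2 (x - a) w - c2 (y - a) w := by
  simp [c2]; ring

lemma carF_eq {N : ℕ} {G : Beam N} (hG : G ∈ Faisc N) (hN : 1 ≤ N) (j : Fin N) :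
    CarF G j = if 0 < (((-1:ℤ) ^ ((j:ℕ)+1) : ℤ) : ℝ) *
        c2 (cg (MF G) ((j:ℕ)+1) - cg (MF G) (j:ℕ))
          (cg G.1 ((j:ℕ)+1) - cg G.2 ((j:ℕ)+1))
      then 1 else -1 := by
  have hjN : (j:ℕ) < N := j.isLt
  set m := (j:ℕ) + 1 with hm
  have h1m : 1 ≤ m := by omega
  have h2m : m ≤ N := by omega
  set w := cg G.1 m - cg G.2 m with hw
  have hwne : w ≠ 0 := sub_ne_zero.2 (faisc_ab hG h1m h2m)
  set v1 := cg (MF G) m - cg (MF G) (m-1) with hv1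
  set v2 := cg (MF G) m - cg (MF G) (m+1) with hv2
  have h0 := MF_on_mirror_line hG hN h1m h2m
  have e1 : c2 v1 w = -c2 (cg (MF G) (m-1) - cg G.1 m) w := by
    rw [hv1, c2_rebase (cg (MF G) m) (cg (MF G) (m-1)) (cg G.1 m) w,
      show c2 (cg (MF G) m - cg G.1 m) w = 0 from h0, zero_sub]
  have e2 : c2 v2 w = -c2 (cg (MF G) (m+1) - cg G.1 m) w := by
    rw [hv2, c2_rebase (cg (MF G) m) (cg (MF G) (m+1)) (cg G.1 m) w,
      show c2 (cg (MF G) m - cg G.1 m) w = 0 from h0, zero_sub]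
  have hprod : 0 < c2 v1 w * c2 v2 w := by
    rw [e1, e2, neg_mul_neg]
    exact side_prod hG hN h1m h2m
  have hv1ne : v1 ≠ 0 := by
    intro h; rw [h, c2_zero_left, zero_mul] at hprod; exact lt_irrefl 0 hprod
  have hv2ne : v2 ≠ 0 := by
    intro h; rw [h, c2_zero_left, mul_zero] at hprod; exact lt_irrefl 0 hprod
  have hε : ((-1:ℤ)^m = 1) ∨ ((-1:ℤ)^m = -1) := by
    rcases Nat.even_or_odd m with h | h
    · exact Or.inl h.neg_one_pow
    · exact Or.inr h.neg_one_pow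
  have hε2 : ((((-1:ℤ)^m : ℤ)):ℝ)^2 = 1 := by
    rcases hε with h | h <;> rw [h] <;> norm_num
  have hiff : (θg (MR G).2 m ∈ APlus (MR G).1 m) ↔
      0 < ((((-1:ℤ)^m : ℤ)):ℝ) * c2 v1 w := by
    have hθ : θg (MR G).2 m = angleOf w := by
      rw [θg, dif_pos (by omega : m - 1 < N)]
      show angleOf (cg G.1 ((m-1) + 1) - cg G.2 ((m-1) + 1)) = _
      rw [show m - 1 + 1 = m by omega]
    rw [hθ]
    have hset : APlus (MR G).1 m
        = arc (angleOf v1) ((-1)^m) ∩ arc (angleOf v2) ((-1)^m) := rfl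
    rw [hset, Set.mem_inter_iff]
    constructor
    · rintro ⟨ha, -⟩
      exact (mem_arc_iff hv1ne hwne hε).1 ha
    · intro h
      have hsq : 0 < (((((-1:ℤ)^m : ℤ)):ℝ) * c2 v1 w) * (((((-1:ℤ)^m : ℤ)):ℝ) * c2 v2 w) := by
        have hr : (((((-1:ℤ)^m : ℤ)):ℝ) * c2 v1 w) * (((((-1:ℤ)^m : ℤ)):ℝ) * c2 v2 w)
            = ((((-1:ℤ)^m : ℤ)):ℝ)^2 * (c2 v1 w * c2 v2 w) := by ring
        rw [hr, hε2, one_mul]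
        exact hprod
      have h2 : 0 < ((((-1:ℤ)^m : ℤ)):ℝ) * c2 v2 w := by
        rcases mul_pos_iff.1 hsq with ⟨-, hq⟩ | ⟨hp, -⟩
        · exact hq
        · linarith
      exact ⟨(mem_arc_iff hv1ne hwne hε).2 h, (mem_arc_iff hv2ne hwne hε).2 h2⟩
  show Car (MR G) j = _
  rw [Car]
  exact if_congr hiff rfl rfl

end S10
namespace S10

section Cont
variable {X : Type} [TopologicalSpace X]

lemma cont_coord {f : X → Pt} (hf : Continuous f) (i : Fin 2) :
    Continuous fun x => f x i := (EuclideanSpace.proj i).continuous.comp hf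

lemma cont_c2 {f g : X → Pt} (hf : Continuous f) (hg : Continuous g) :
    Continuous fun x => c2 (f x) (g x) :=
  ((cont_coord hf 0).mul (cont_coord hg 1)).sub ((cont_coord hf 1).mul (cont_coord hg 0))

lemma cont_cg {N : ℕ} {F : X → Chain N} (hF : Continuous F) {k : ℕ} (hk : k < N+2) :
    Continuous fun x => cg (F x) k := by
  have h : (fun x => cg (F x) k) = fun x => F x ⟨k, hk⟩ := by
    funext x; rw [cg, dif_pos hk]
  rw [h]
  exact (continuous_apply _).comp hF

lemma cont_qv {A B A' B' : X → Pt} (hA : Continuous A) (hB : Continuous B)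
    (hA' : Continuous A') (hB' : Continuous B') :
    Continuous fun x => qv (A x) (B x) (A' x) (B' x) := by
  refine Continuous.sub ?_ ?_
  · exact (cont_c2 hB hB').smul (hA'.sub hA)
  · exact (cont_c2 hA hA').smul (hB'.sub hB)

lemma cont_Dv {A B A' B' P : X → Pt} (hA : Continuous A) (hB : Continuous B)
    (hA' : Continuous A') (hB' : Continuous B') (hP : Continuous P) :
    Continuous fun x => Dv (A x) (B x) (A' x) (B' x) (P x) :=
  (cont_qv hA hB hA' hB').sub ((cont_c2 (hA'.sub hA) (hB'.sub hB)).smul hP)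

lemma cont_stepPt {A B A' B' P : X → Pt} (hA : Continuous A) (hB : Continuous B)
    (hA' : Continuous A') (hB' : Continuous B') (hP : Continuous P)
    (hden : ∀ x, c2 (Dv (A x) (B x) (A' x) (B' x) (P x)) (B' x - A' x) ≠ 0) :
    Continuous fun x => stepPt (A x) (B x) (A' x) (B' x) (P x) := by
  refine hP.add (Continuous.smul (f := fun x => c2 (A' x - P x) (B' x - A' x) / c2 (Dv (A x) (B x) (A' x) (B' x) (P x)) (B' x - A' x)) ?_ (cont_Dv hA hB hA' hB' hP))
  exact (cont_c2 (hA'.sub hP) (hB'.sub hA')).div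
    (cont_c2 (cont_Dv hA hB hA' hB' hP) (hB'.sub hA')) hden

lemma impact'_cont {N : ℕ} {γ : X → Beam N} (hc : Continuous γ) (hγ : ∀ x, γ x ∈ Faisc N) :
    ∀ m, m + 1 ≤ N → Continuous fun x => impact' (γ x) m := by
  have h1 : Continuous fun x => (γ x).1 := continuous_fst.comp hc
  have h2 : Continuous fun x => (γ x).2 := continuous_snd.comp hc
  intro m
  induction m with
  | zero =>
    intro hm
    show Continuous fun x => midpoint ℝ (cg (γ x).1 1) (cg (γ x).2 1)
    have hmid : ∀ u v : Pt, midpoint ℝ u v = (2⁻¹ : ℝ) • (u + v) := by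
      intro u v; rw [midpoint_eq_smul_add]; norm_num
    simp only [hmid]
    exact Continuous.smul (f := fun _ => (2⁻¹ : ℝ)) continuous_const ((cont_cg h1 (k := 1) (by omega)).add (cont_cg h2 (k := 1) (by omega)))
  | succ m ih =>
    intro hm
    show Continuous fun x => stepPt (cg (γ x).1 (m+1)) (cg (γ x).2 (m+1))
      (cg (γ x).1 (m+2)) (cg (γ x).2 (m+2)) (impact' (γ x) m)
    exact cont_stepPt (cont_cg h1 (by omega)) (cont_cg h2 (by omega))
      (cont_cg h1 (by omega)) (cont_cg h2 (by omega)) (ih (by omega))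
      (fun x => impact_den (hγ x) (by omega))

lemma cg_fin {N : ℕ} (c : Chain N) (i : Fin (N+2)) : cg c i.1 = c i := by
  rw [cg, dif_pos i.isLt]

lemma MF_cont {N : ℕ} (hN : 1 ≤ N) {γ : X → Beam N} (hc : Continuous γ)
    (hγ : ∀ x, γ x ∈ Faisc N) :
    Continuous fun x => MF (γ x) := by
  have h1 : Continuous fun x => (γ x).1 := continuous_fst.comp hc
  apply continuous_pi
  intro i
  by_cases hi0 : (i : ℕ) = 0
  · have heq : ∀ x, pt (-1) 0 = MF (γ x) i := by
      intro x
      rw [← cg_fin (MF (γ x)) i, hi0, MF_cg_zero (hγ x)]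
    exact continuous_const.congr heq
  · by_cases hiN : (i : ℕ) ≤ N
    · have hm : (i : ℕ) - 1 + 1 ≤ N := by omega
      have heq : ∀ x, impact' (γ x) ((i:ℕ) - 1) = MF (γ x) i := by
        intro x
        rw [← cg_fin (MF (γ x)) i, MF_eq, cg_tChain_pos _ _ (by omega) (by omega),
          ← (impact_inv (hγ x) ((i:ℕ) - 1) hm).2]
      exact (impact'_cont hc hγ ((i:ℕ) - 1) hm).congr heq
    · have hiN1 : (i : ℕ) = N + 1 := by have := i.isLt; omega
      have heq : ∀ x, cg (γ x).1 (N+1) = MF (γ x) i := by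
        intro x
        rw [← cg_fin (MF (γ x)) i, MF_eq, hiN1, cg_tChain_pos _ _ (by omega) (by omega),
          show N + 1 - 1 = N from rfl, impact_last (hγ x) hN]
      exact (cont_cg h1 (by omega)).congr heq

end Cont

lemma sign_transport {g : unitInterval → ℝ} (hc : Continuous g) (hne : ∀ s, g s ≠ 0) :
    (0 < g 0 ↔ 0 < g 1) := by
  have key : ∀ a b : unitInterval, 0 < g a → g b < 0 → False := by
    intro a b ha hb
    have hsub := IsPreconnected.intermediate_value isPreconnected_univ
      (Set.mem_univ b) (Set.mem_univ a) hc.continuousOn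
    obtain ⟨s, -, hs⟩ := hsub ⟨hb.le, ha.le⟩
    exact hne s hs
  constructor
  · intro h
    rcases (hne 1).lt_or_gt with h1 | h1
    · exact (key 0 1 h h1).elim
    · exact h1
  · intro h
    rcases (hne 0).lt_or_gt with h1 | h1
    · exact (key 1 0 h h1).elim
    · exact h1

/-- `X1 ≠ 0`. -/
lemma X_prod {N : ℕ} {G : Beam N} (hG : G ∈ Faisc N) (hN : 1 ≤ N) {m : ℕ}
    (h1m : 1 ≤ m) (h2m : m ≤ N) :
    0 < c2 (cg (MF G) m - cg (MF G) (m-1)) (cg G.1 m - cg G.2 m) *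
        c2 (cg (MF G) m - cg (MF G) (m+1)) (cg G.1 m - cg G.2 m) := by
  have h0 := MF_on_mirror_line hG hN h1m h2m
  rw [c2_rebase (cg (MF G) m) (cg (MF G) (m-1)) (cg G.1 m),
    c2_rebase (cg (MF G) m) (cg (MF G) (m+1)) (cg G.1 m), h0, zero_sub, zero_sub,
    neg_mul_neg]
  exact side_prod hG hN h1m h2m

end S10
/-- along a path of beams, the centered chains stay in the same
component of `LO^N` and the characteristic is constant. -/
theorem statement10 (N : ℕ) (hN : 1 ≤ N) (F F' : Beam N)
    (hF : F ∈ Faisc N) (hF' : F' ∈ Faisc N) (h : JoinedIn (Faisc N) F F') :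
    JoinedIn (LO N) (MF F) (MF F') ∧ CarF F = CarF F' := by
  obtain ⟨γ, hγ⟩ := h
  have hcont : Continuous fun s : unitInterval => MF (γ s) :=
    S10.MF_cont hN γ.continuous hγ
  constructor
  · refine ⟨⟨⟨fun s => MF (γ s), hcont⟩, ?_, ?_⟩, fun s => S10.MF_mem_LO (hγ s) hN⟩
    · show MF (γ 0) = MF F
      rw [γ.source]
    · show MF (γ 1) = MF F'
      rw [γ.target]
  · funext j
    have hjN : (j:ℕ) < N := j.isLt
    have hm1 : 1 ≤ (j:ℕ) + 1 := by omega
    have hm2 : (j:ℕ) + 1 ≤ N := by omega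
    set g : unitInterval → ℝ := fun s =>
      (((-1:ℤ) ^ ((j:ℕ)+1) : ℤ) : ℝ) *
        S10.c2 (cg (MF (γ s)) ((j:ℕ)+1) - cg (MF (γ s)) (j:ℕ))
          (cg (γ s).1 ((j:ℕ)+1) - cg (γ s).2 ((j:ℕ)+1)) with hgdef
    have hgc : Continuous g := by
      refine continuous_const.mul (S10.cont_c2 ?_ ?_)
      · exact (S10.cont_cg hcont (by omega)).sub (S10.cont_cg hcont (by omega))
      · exact (S10.cont_cg (continuous_fst.comp γ.continuous) (by omega)).sub
          (S10.cont_cg (continuous_snd.comp γ.continuous) (by omega))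
    have hgne : ∀ s, g s ≠ 0 := by
      intro s
      have hX := S10.X_prod (hγ s) hN hm1 hm2
      rw [show (j:ℕ) + 1 - 1 = (j:ℕ) from rfl] at hX
      have hX1 : S10.c2 (cg (MF (γ s)) ((j:ℕ)+1) - cg (MF (γ s)) (j:ℕ))
          (cg (γ s).1 ((j:ℕ)+1) - cg (γ s).2 ((j:ℕ)+1)) ≠ 0 :=
        left_ne_zero_of_mul hX.ne'
      have hεne : ((((-1:ℤ)^((j:ℕ)+1) : ℤ)):ℝ) ≠ 0 := by
        rcases Nat.even_or_odd ((j:ℕ)+1) with hpar | hpar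
        · rw [hpar.neg_one_pow]; norm_num
        · rw [hpar.neg_one_pow]; norm_num
      exact mul_ne_zero hεne hX1
    have hsign := S10.sign_transport hgc hgne
    have e0 : g 0 = (((-1:ℤ) ^ ((j:ℕ)+1) : ℤ) : ℝ) *
        S10.c2 (cg (MF F) ((j:ℕ)+1) - cg (MF F) (j:ℕ))
          (cg F.1 ((j:ℕ)+1) - cg F.2 ((j:ℕ)+1)) := by
      simp only [hgdef]
      rw [γ.source]
    have e1 : g 1 = (((-1:ℤ) ^ ((j:ℕ)+1) : ℤ) : ℝ) *
        S10.c2 (cg (MF F') ((j:ℕ)+1) - cg (MF F') (j:ℕ))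
          (cg F'.1 ((j:ℕ)+1) - cg F'.2 ((j:ℕ)+1)) := by
      simp only [hgdef]
      rw [γ.target]
    rw [e0, e1] at hsign
    rw [S10.carF_eq hF hN j, S10.carF_eq hF' hN j]
    exact if_congr hsign rfl rfl
end
end
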